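/- arXiv:1703.02325 — 19 statements merged into one kernel-verified Lean document; each statement's English description precedes it below -/
import Mathlib

section
/- Let N be a join-semilattice with a least element ⊥ and let E ⊆ N be a sub-join-semilattice containing ⊥. Then for every x ∈ N: x ∈ E if and only if φ(x) = ψ(x) for every pair of B-module morphisms φ, ψ : N → Bool whose restrictions to E agree. (Separation theorem, the analogue of the Hahn–Banach theorem for B-modules.) -/
/-!
Separation theorem (Hahn–Banach analogue) for `𝔹`-modules:
a `𝔹`-module is a join-semilattice with a least element, a morphism is a `SupBotHom`,
and `Bool` is the two-element `𝔹`-module.  An element `x` of `N` belongs to a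
sub-`𝔹`-module `E ⊆ N` if and only if every pair of morphisms `N → Bool` agreeing
on `E` agrees at `x`.
-/

theorem stmt0 {N : Type*} [SemilatticeSup N] [OrderBot N]
    (E : Set N) (hbot : ⊥ ∈ E) (hsup : ∀ a ∈ E, ∀ b ∈ E, a ⊔ b ∈ E) (x : N) :
    x ∈ E ↔ ∀ φ ψ : SupBotHom N Bool, (∀ e ∈ E, φ e = ψ e) → φ x = ψ x := by
  classical
  have hsup_or : ∀ u v : Bool, u ⊔ v = (u || v) := fun _ _ => rfl
  constructor
  · intro hx φ ψ h; exact h x hx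
  · intro h
    let φ : SupBotHom N Bool :=
      { toFun := fun y => decide ¬(y ≤ x)
        map_sup' := by
          intro a b
          rw [hsup_or, ← Bool.decide_or, decide_eq_decide]
          rw [sup_le_iff]; tauto
        map_bot' := by simp }
    let ψ : SupBotHom N Bool :=
      { toFun := fun y => decide ¬(∃ d, d ∈ E ∧ d ≤ x ∧ y ≤ d)
        map_sup' := by
          intro a b
          rw [hsup_or, ← Bool.decide_or, decide_eq_decide, ← not_and_or]
          constructor
          · rintro hab ⟨⟨d1, hd1E, hd1x, had⟩, ⟨d2, hd2E, hd2x, hbd⟩⟩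
            exact hab ⟨d1 ⊔ d2, hsup _ hd1E _ hd2E, sup_le hd1x hd2x,
              sup_le (had.trans le_sup_left) (hbd.trans le_sup_right)⟩
          · rintro hc ⟨d, hdE, hdx, hab⟩
            exact hc ⟨⟨d, hdE, hdx, le_sup_left.trans hab⟩,
              ⟨d, hdE, hdx, le_sup_right.trans hab⟩⟩
        map_bot' := by
          have : ∃ d, d ∈ E ∧ d ≤ x ∧ (⊥ : N) ≤ d := ⟨⊥, hbot, bot_le, le_rfl⟩
          simpa using this }
    have hagree : ∀ e ∈ E, φ e = ψ e := by
      intro e heE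
      show decide _ = decide _
      rw [decide_eq_decide]
      constructor
      · rintro hex ⟨d, _, hdx, hed⟩
        exact hex (hed.trans hdx)
      · intro hc hex
        exact hc ⟨e, heE, hex, le_rfl⟩
    have hx := h φ ψ hagree
    have hφ : φ x = false := by simp [φ]
    rw [hφ, eq_comm] at hx
    have hψ : ∃ d, d ∈ E ∧ d ≤ x ∧ x ≤ d := by
      by_contra hc
      have : ψ x = true := by
        show decide _ = true
        simpa using hc
      rw [this] at hx
      simp at hx
    obtain ⟨d, hdE, hdx, hxd⟩ := hψ
    rwa [le_antisymm hxd hdx]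
end

section
/- Let M be a join-semilattice with a least element ⊥ and N ⊆ M a sub-join-semilattice containing ⊥. Then every B-module morphism φ : N → Bool extends to a B-module morphism M → Bool; that is, the restriction map SupBotHom(M, Bool) → SupBotHom(N, Bool) is surjective. (Consequently, Bool, and any product of copies of Bool, is an injective object in the category of B-modules.) -/
/-!
Extension theorem for `𝔹`-modules: every `𝔹`-module morphism from a
sub-join-semilattice (with `⊥`) of `M` to `Bool` extends to all of `M`;
i.e. the restriction map `SupBotHom(M, Bool) → SupBotHom(N, Bool)` along an
injective morphism `ι : N → M` is surjective (so `Bool` is injective in the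
category of `𝔹`-modules).
-/

theorem stmt1 {M N : Type*} [SemilatticeSup M] [OrderBot M]
    [SemilatticeSup N] [OrderBot N]
    (ι : SupBotHom N M) (hι : Function.Injective ι)
    (φ : SupBotHom N Bool) :
    ∃ ψ : SupBotHom M Bool, ∀ n : N, ψ (ι n) = φ n := by
  classical
  -- ι reflects the order
  have hle : ∀ a b : N, ι a ≤ ι b → a ≤ b := by
    intro a b h
    have : ι (a ⊔ b) = ι b := by
      rw [map_sup]; exact sup_eq_right.mpr h
    exact sup_eq_right.mp (hι this)
  refine ⟨⟨⟨fun m => !(decide (∃ n, φ n = false ∧ m ≤ ι n)), ?_⟩, ?_⟩, ?_⟩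
  · intro a b
    show (!(decide _)) = (!(decide _)) ⊔ (!(decide _))
    have : (∃ n, φ n = false ∧ a ⊔ b ≤ ι n) ↔
        ((∃ n, φ n = false ∧ a ≤ ι n) ∧ (∃ n, φ n = false ∧ b ≤ ι n)) := by
      constructor
      · rintro ⟨n, hf, hab⟩
        exact ⟨⟨n, hf, le_trans le_sup_left hab⟩, ⟨n, hf, le_trans le_sup_right hab⟩⟩
      · rintro ⟨⟨n₁, hf₁, h₁⟩, ⟨n₂, hf₂, h₂⟩⟩
        refine ⟨n₁ ⊔ n₂, ?_, ?_⟩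
        · rw [map_sup, hf₁, hf₂]; rfl
        · rw [map_sup]
          exact sup_le (le_trans h₁ le_sup_left) (le_trans h₂ le_sup_right)
    rw [decide_eq_decide.mpr this]
    by_cases h1 : (∃ n, φ n = false ∧ a ≤ ι n) <;>
      by_cases h2 : (∃ n, φ n = false ∧ b ≤ ι n) <;>
        simp [h1, h2]
    exact Classical.dec _
  · show (!(decide _)) = ⊥
    have : ∃ n, φ n = false ∧ (⊥ : M) ≤ ι n := ⟨⊥, map_bot φ, bot_le⟩
    rw [decide_eq_true this]; rfl
  · intro n
    show (!(decide _)) = φ n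
    cases hn : φ n with
    | false =>
      have : ∃ n', φ n' = false ∧ ι n ≤ ι n' := ⟨n, hn, le_rfl⟩
      simp [this]
    | true =>
      have : ¬ ∃ n', φ n' = false ∧ ι n ≤ ι n' := by
        rintro ⟨n', hf, h⟩
        have := OrderHomClass.mono φ (hle _ _ h)
        rw [hn, hf] at this
        exact absurd this (by decide)
      simp [this]
end

section
/- In the category of join-semilattices with a least element and SupBotHoms (Mathlib's SemilatSupCat), a morphism f is a monomorphism if and only if the underlying function is injective, and f is an epimorphism if and only if the underlying function is surjective. -/
open CategoryTheory

universe u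

/-- Test map from `ULift Bool` sending `true ↦ x`, `false ↦ ⊥`. -/
def boolHom {X : SemilatSupCat.{u}} (x : X) : SupBotHom (ULift.{u} Bool) X where
  toFun b := if b.down then x else ⊥
  map_sup' a b := by cases a; cases b; rename_i a b; cases a <;> cases b <;> simp [ULift.up_sup]
  map_bot' := rfl

theorem stmt2 {X Y : SemilatSupCat} (f : X ⟶ Y) :
    (Mono f ↔ Function.Injective (f : SupBotHom X Y)) ∧
    (Epi f ↔ Function.Surjective (f : SupBotHom X Y)) := by
  constructor
  · constructor
    · intro hm x y hxy
      let g₁ : SemilatSupCat.of (ULift Bool) ⟶ X := boolHom x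
      let g₂ : SemilatSupCat.of (ULift Bool) ⟶ X := boolHom y
      have h : g₁ ≫ f = g₂ ≫ f := by
        apply DFunLike.ext (F := SupBotHom (ULift Bool) Y)
        intro b
        cases b; rename_i b
        cases b
        · show f ⊥ = f ⊥; rfl
        · exact hxy
      have := (cancel_mono f).mp h
      exact DFunLike.congr_fun (F := SupBotHom (ULift Bool) X) this (ULift.up true)
    · intro hf
      constructor
      intro Z g h hgh
      apply DFunLike.ext (F := SupBotHom Z X)
      intro z
      exact hf (DFunLike.congr_fun (F := SupBotHom Z Y) hgh z)
  · constructor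
    · intro he b
      let f' : SupBotHom X Y := f
      have hsup : ∀ a c : X, f (a ⊔ c) = f a ⊔ f c := fun a c => map_sup f' a c
      have hbot : f (⊥ : X) = ⊥ := map_bot f'
      let g₁ : Y ⟶ SemilatSupCat.of (ULift Prop) :=
        { toFun := fun z => ULift.up (¬ ∃ x : X, f x ≤ b ∧ z ≤ f x)
          map_sup' := fun z w => by
            rw [← ULift.up_sup]
            refine congrArg ULift.up ?_
            show (¬ _) = ((¬ _) ∨ (¬ _))
            rw [← not_and_or]
            congr 1
            apply propext
            constructor
            · rintro ⟨x, hx, hzw⟩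
              exact ⟨⟨x, hx, le_trans le_sup_left hzw⟩, ⟨x, hx, le_trans le_sup_right hzw⟩⟩
            · rintro ⟨⟨x₁, hx₁, hz⟩, ⟨x₂, hx₂, hw⟩⟩
              refine ⟨x₁ ⊔ x₂, ?_, ?_⟩
              · rw [hsup]; exact sup_le hx₁ hx₂
              · rw [hsup]; exact sup_le (le_trans hz le_sup_left) (le_trans hw le_sup_right)
          map_bot' := by
            refine congrArg ULift.up ?_
            apply eq_false
            intro hn
            exact hn ⟨⊥, by rw [hbot]; exact ⟨bot_le, le_rfl⟩⟩ }
      let g₂ : Y ⟶ SemilatSupCat.of (ULift Prop) :=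
        { toFun := fun z => ULift.up (¬ z ≤ b)
          map_sup' := fun z w => by
            rw [← ULift.up_sup]
            refine congrArg ULift.up ?_
            show (¬ _) = ((¬ _) ∨ (¬ _))
            rw [← not_and_or]
            exact congrArg Not (propext sup_le_iff)
          map_bot' := congrArg ULift.up (eq_false (not_not_intro bot_le)) }
      have hcomp : f ≫ g₁ = f ≫ g₂ := by
        apply DFunLike.ext (F := SupBotHom X (ULift Prop))
        intro x
        refine congrArg ULift.up ?_
        congr 1
        apply propext
        constructor
        · rintro ⟨x', hx', hxx'⟩; exact le_trans hxx' hx'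
        · intro h; exact ⟨x, h, le_rfl⟩
      have hg : g₁ = g₂ := (cancel_epi f).mp hcomp
      have hb := congrArg ULift.down (DFunLike.congr_fun (F := SupBotHom Y (ULift Prop)) hg b)
      show ∃ x, f x = b
      have : ¬ ¬ ∃ x : X, f x ≤ b ∧ b ≤ f x := by
        intro hn
        have hb' : (¬ ∃ x : X, f x ≤ b ∧ b ≤ f x) = (¬ (b : Y) ≤ b) := hb
        have h2 : ¬ (b : Y) ≤ b := hb' ▸ hn
        exact h2 le_rfl
      obtain ⟨x, h₁, h₂⟩ := not_not.mp this
      exact ⟨x, le_antisymm h₁ h₂⟩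
    · intro hf
      constructor
      intro Z g h hgh
      apply DFunLike.ext (F := SupBotHom Y Z)
      intro z
      obtain ⟨x, rfl⟩ := hf z
      exact DFunLike.congr_fun (F := SupBotHom X Z) hgh x
end

section
/- Let S and T be complete lattices that are compactly generated (algebraic), and let f : S → T be a map preserving arbitrary suprema and sending compact elements of S to compact elements of T. Then f is injective if and only if its restriction to the set of compact elements of S is injective. -/
/-!
A morphism of algebraic (compactly generated complete) lattices, i.e. a map
preserving arbitrary suprema and sending compact elements to compact elements,
is injective iff its restriction to the compact elements is injective.
-/

theorem stmt3 {S T : Type*} [CompleteLattice S] [CompleteLattice T]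
    [IsCompactlyGenerated S] [IsCompactlyGenerated T]
    (f : sSupHom S T)
    (hcomp : ∀ x : S, IsCompactElement x →
      IsCompactElement (f x)) :
    Function.Injective f ↔
      Set.InjOn f {x : S | IsCompactElement x} := by
  classical
  constructor
  · exact fun h => h.injOn
  · intro hinj
    -- key: f x ≤ f y → x ≤ y
    have key : ∀ x y : S, f x ≤ f y → x ≤ y := by
      intro x y hxy
      rw [← sSup_compact_le_eq x]
      refine sSup_le fun c hc => ?_
      obtain ⟨hcc, hcx⟩ := hc
      -- f c ≤ f y = sSup of images of compacts below y
      have hfc : f c ≤ f y := le_trans (OrderHomClass.mono f hcx) hxy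
      have hy : f y = sSup (f '' {k : S | IsCompactElement k ∧ k ≤ y}) := by
        rw [← map_sSup, sSup_compact_le_eq]
      obtain ⟨t, htsub, htle⟩ := (CompleteLattice.isCompactElement_iff_exists_le_sSup_of_le_sSup (k := f c)).mp (hcomp c hcc) _ (hy ▸ hfc)
      obtain ⟨G, hGsub, hGimg⟩ := (Finset.subset_set_image_iff.mp htsub)
      set k : S := G.sup id with hk
      have hkc : IsCompactElement k :=
        CompleteLattice.isCompactElement_finsetSup _ fun z hz => (hGsub hz).1
      have hky : k ≤ y := Finset.sup_le fun z hz => (hGsub hz).2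
      -- f c ≤ f k
      have hfk : f c ≤ f k := by
        have h1 : f k = sSup (f '' ↑G) := by
          rw [hk, Finset.sup_id_eq_sSup, map_sSup]
        calc f c ≤ t.sup id := htle
          _ ≤ sSup ↑t := by rw [Finset.sup_id_eq_sSup]
          _ = sSup (f '' ↑G) := by rw [← hGimg, Finset.coe_image]
          _ = f k := h1.symm
      -- f (c ⊔ k) = f k
      have hsup : f (c ⊔ k) = f c ⊔ f k := by
        rw [← sSup_pair, map_sSup, Set.image_pair, sSup_pair]
      have heq : f (c ⊔ k) = f k := by rw [hsup, sup_eq_right.mpr hfk]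
      have hck : IsCompactElement (c ⊔ k) := by
        have h2 := CompleteLattice.isCompactElement_finsetSup (f := (id : S → S))
          ({c, k} : Finset S) (by rintro z hz; simp at hz; rcases hz with rfl | rfl <;> assumption)
        simpa using h2
      have : c ⊔ k = k := hinj hck hkc heq
      exact le_trans (le_trans le_sup_left this.le) hky
    intro a b hab
    exact le_antisymm (key a b hab.le) (key b a hab.ge)
end

section
/- Let F and G be finite join-semilattices with least element ⊥ and f : F → G a B-module morphism. Set S := {z ∈ F | ∀ y ∈ F, f(y) ≤ f(z) → y ≤ z} (the support of f), and for ξ ∈ F let q_S(ξ) := the infimum in F of {a ∈ S | a ≥ ξ}. Then: (1) S is a lattice for the order induced from F, with join a ∨_S b = q_S(a ⊔ b) and least element q_S(⊥); (2) q_S is a surjective B-module morphism from F onto (S, ∨_S, q_S(⊥)); (3) the restriction f|_S : (S, ∨_S) → G is an injective B-module morphism; (4) f = f|_S ∘ q_S; (5) the inclusion S ↪ F preserves binary meets: the meet in S of two elements of S equals their meet in F. -/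
/-!
Canonical decomposition of a morphism `f : F → G` of finite `𝔹`-modules
(join-semilattices with `⊥`).  With `S = {z | ∀ y, f y ≤ f z → y ≤ z}` the
support of `f` and `q ξ = ⨅ {a ∈ S | ξ ≤ a}` (expressed via `IsGLB`):
(1) `S` is a lattice for the induced order, with join `q (a ⊔ b)` and least
element `q ⊥`; (2) `q` is a surjective `𝔹`-module morphism onto `S`;
(3) `f` restricted to `S` is an injective `𝔹`-module morphism;
(4) `f = (f|_S) ∘ q`; (5) the inclusion `S ↪ F` preserves binary meets.
-/

theorem stmt4 {F G : Type*} [SemilatticeSup F] [OrderBot F] [Finite F]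
    [SemilatticeSup G] [OrderBot G] [Finite G] (f : SupBotHom F G)
    (S : Set F) (hS : S = {z : F | ∀ y : F, f y ≤ f z → y ≤ z}) :
    ∃ q : F → F,
      -- `q ξ` is the infimum in `F` of `{a ∈ S | ξ ≤ a}`
      (∀ ξ : F, IsGLB {a : F | a ∈ S ∧ ξ ≤ a} (q ξ)) ∧
      -- (1) `S` is a lattice with join `a ∨_S b = q (a ⊔ b)` and least element `q ⊥`
      (∀ ξ : F, q ξ ∈ S) ∧
      (∀ a ∈ S, ∀ b ∈ S, IsLeast {c : F | c ∈ S ∧ a ≤ c ∧ b ≤ c} (q (a ⊔ b))) ∧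
      IsLeast S (q ⊥) ∧
      -- (5) for `a, b ∈ S`, the meet of `a` and `b` in `S` exists and coincides
      -- with their meet in `F` (the inclusion preserves binary meets)
      (∀ a ∈ S, ∀ b ∈ S, ∃ m ∈ S, IsGLB ({a, b} : Set F) m) ∧
      -- (2) `q` is a surjective morphism of `𝔹`-modules from `F` onto `(S, ∨_S, q ⊥)`
      (∀ a ∈ S, q a = a) ∧
      (∀ x y : F, q (x ⊔ y) = q (q x ⊔ q y)) ∧
      -- (3) `f` restricted to `S` is an injective morphism `(S, ∨_S) → G`
      Set.InjOn f S ∧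
      f (q ⊥) = ⊥ ∧
      (∀ a ∈ S, ∀ b ∈ S, f (q (a ⊔ b)) = f a ⊔ f b) ∧
      -- (4) `f = f|_S ∘ q`
      (∀ x : F, f (q x) = f x) := by
  classical
  have : Fintype F := Fintype.ofFinite F
  subst hS
  set q : F → F := fun x => (Finset.univ.filter fun y => f y ≤ f x).sup id with hq
  have hfq : ∀ x, f (q x) = f x := by
    intro x
    have h1 : f (q x) ≤ f x := by
      rw [hq]
      rw [map_finset_sup]
      apply Finset.sup_le
      intro y hy
      simpa using (Finset.mem_filter.mp hy).2
    have h2 : x ≤ q x := Finset.le_sup (f := id) (by simp)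
    exact le_antisymm h1 (OrderHomClass.mono f h2)
  have hle : ∀ x, x ≤ q x := fun x => Finset.le_sup (f := id) (by simp)
  have hqS : ∀ x, q x ∈ {z : F | ∀ y : F, f y ≤ f z → y ≤ z} := by
    intro x y hy
    rw [hfq] at hy
    exact Finset.le_sup (f := id) (by simp [hy])
  have hlb : ∀ x, ∀ a ∈ {z : F | ∀ y : F, f y ≤ f z → y ≤ z}, x ≤ a → q x ≤ a := by
    intro x a ha hxa
    rw [hq]
    apply Finset.sup_le
    intro y hy
    have : f y ≤ f x := by simpa using (Finset.mem_filter.mp hy).2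
    exact ha y (this.trans (OrderHomClass.mono f hxa))
  have hleast : ∀ x, IsLeast {a : F | a ∈ {z : F | ∀ y : F, f y ≤ f z → y ≤ z} ∧ x ≤ a} (q x) :=
    fun x => ⟨⟨hqS x, hle x⟩, fun a ⟨ha, hxa⟩ => hlb x a ha hxa⟩
  have hqcongr : ∀ x y, f x = f y → q x = q y := by
    intro x y h
    simp only [hq, h]
  refine ⟨q, fun ξ => (hleast ξ).isGLB, hqS, ?_, ?_, ?_, ?_, ?_, ?_, ?_, ?_, hfq⟩
  · intro a ha b hb
    refine ⟨⟨hqS _, le_sup_left.trans (hle _), le_sup_right.trans (hle _)⟩, ?_⟩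
    rintro c ⟨hc, hac, hbc⟩
    exact hlb _ c hc (sup_le hac hbc)
  · exact ⟨hqS ⊥, fun a ha => hlb ⊥ a ha bot_le⟩
  · intro a ha b hb
    set m : F := (Finset.univ.filter fun y => y ≤ a ∧ y ≤ b).sup id with hm
    have hma : m ≤ a := Finset.sup_le fun y hy => (Finset.mem_filter.mp hy).2.1
    have hmb : m ≤ b := Finset.sup_le fun y hy => (Finset.mem_filter.mp hy).2.2
    refine ⟨m, ?_, ?_⟩
    · intro y hy
      have hya : y ≤ a := ha y (hy.trans (OrderHomClass.mono f hma))
      have hyb : y ≤ b := hb y (hy.trans (OrderHomClass.mono f hmb))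
      exact Finset.le_sup (f := id) (by simp [hya, hyb])
    · constructor
      · rintro x (rfl | rfl) <;> simp [hma, hmb]
      · intro x hx
        have hxa := hx (Set.mem_insert a {b})
        have hxb := hx (Set.mem_insert_iff.mpr (Or.inr rfl))
        exact Finset.le_sup (f := id) (by simp [hxa, hxb])
  · intro a ha
    exact le_antisymm (hlb a a ha le_rfl) (hle a)
  · intro x y
    apply hqcongr
    simp only [map_sup, hfq]
  · intro a ha b hb h
    exact le_antisymm (hb a h.le) (ha b h.ge)
  · rw [hfq]; exact map_bot f
  · intro a ha b hb
    rw [hfq, map_sup]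
end

section
/- In the category of B-modules (join-semilattices with ⊥ and SupBotHoms), for every morphism f : L → M the canonical morphism from the coimage to the image is an isomorphism. Concretely: let s₁, s₂ : M → M ⊕ M be the two coprojections into the biproduct (M ⊕ M = M × M with componentwise joins, s₁(x) = (x,⊥), s₂(x) = (⊥,x)), let ρ : M ⊕ M → C be the coequalizer of s₁∘f and s₂∘f, and set γⱼ := ρ∘sⱼ : M → C. Then {x ∈ M | γ₁(x) = γ₂(x)} equals the range f(L) of f; equivalently, the equalizer of the cokernel pair of f is the range of f, which is in turn isomorphic to the coequalizer of the kernel pair of f. -/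
universe u

/-!
Axiom AB2' in the category of `𝔹`-modules: for every morphism `f : L → M`
the canonical map `Coim f → Im f` is an isomorphism.  Concretely, letting
`s₁ x = (x, ⊥)`, `s₂ x = (⊥, x) : M → M ⊕ M` and `ρ : M ⊕ M → C` the
coequalizer of `s₁ ∘ f` and `s₂ ∘ f` (encoded by its universal property),
the equalizer `{x | ρ (x, ⊥) = ρ (⊥, x)}` of the cokernel pair `γ₁ = ρ ∘ s₁`,
`γ₂ = ρ ∘ s₂` equals the range of `f`.
-/

theorem stmt5 {L M C : Type u} [SemilatticeSup L] [OrderBot L]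
    [SemilatticeSup M] [OrderBot M] [SemilatticeSup C] [OrderBot C]
    (f : SupBotHom L M) (ρ : SupBotHom (M × M) C)
    (hcoeq : ∀ l : L, ρ (f l, ⊥) = ρ (⊥, f l))
    (huniv : ∀ (X : Type u) [SemilatticeSup X] [OrderBot X]
      (h : SupBotHom (M × M) X), (∀ l : L, h (f l, ⊥) = h (⊥, f l)) →
        ∃! k : SupBotHom C X, ∀ z : M × M, k (ρ z) = h z) :
    {x : M | ρ (x, ⊥) = ρ (⊥, x)} = Set.range f := by
  ext x
  simp only [Set.mem_setOf_eq, Set.mem_range]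
  constructor
  · intro hx
    -- the test morphism into `ULift Prop`
    set P : M → Prop := fun b => ∃ l : L, b ≤ f l ∧ f l ≤ x with hP
    have hPmono : ∀ {b b' : M}, b ≤ b' → P b' → P b := by
      rintro b b' hb ⟨l, h1, h2⟩; exact ⟨l, hb.trans h1, h2⟩
    have hPsup : ∀ b b' : M, P (b ⊔ b') ↔ P b ∧ P b' := by
      intro b b'
      constructor
      · intro hbb
        exact ⟨hPmono le_sup_left hbb, hPmono le_sup_right hbb⟩
      · rintro ⟨⟨l, h1, h2⟩, ⟨l', h1', h2'⟩⟩
        exact ⟨l ⊔ l', by simpa using ⟨h1.trans (by simp), h1'.trans (by simp)⟩,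
          by simpa using ⟨h2, h2'⟩⟩
    have hPbot : P ⊥ := ⟨⊥, by simp⟩
    have hPf : ∀ l : L, P (f l) ↔ f l ≤ x := by
      intro l
      exact ⟨fun ⟨l', h1, h2⟩ => h1.trans h2, fun h => ⟨l, le_rfl, h⟩⟩
    let h : SupBotHom (M × M) (ULift.{u} Prop) :=
      { toFun := fun z => ⟨¬ z.1 ≤ x ∨ ¬ P z.2⟩
        map_sup' := by
          rintro ⟨a, b⟩ ⟨a', b'⟩
          apply congrArg ULift.up
          apply propext
          show (¬ a ⊔ a' ≤ x ∨ ¬ P (b ⊔ b')) ↔ (¬ a ≤ x ∨ ¬ P b) ∨ (¬ a' ≤ x ∨ ¬ P b')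
          rw [sup_le_iff, hPsup]
          clear hP; clear_value P
          tauto
        map_bot' := by
          apply congrArg ULift.up
          apply propext
          show (¬ (⊥ : M) ≤ x ∨ ¬ P ⊥) ↔ False
          simp [hPbot]
        }
    have hcomm : ∀ l : L, h (f l, ⊥) = h (⊥, f l) := by
      intro l
      apply congrArg ULift.up
      apply propext
      show (¬ f l ≤ x ∨ ¬ P ⊥) ↔ (¬ (⊥ : M) ≤ x ∨ ¬ P (f l))
      simp [hPbot, hPf]
    obtain ⟨k, hk, -⟩ := huniv (ULift.{u} Prop) h hcomm
    have key : h (x, ⊥) = h (⊥, x) := by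
      rw [← hk (x, ⊥), ← hk (⊥, x), hx]
    have key' : (¬ x ≤ x ∨ ¬ P ⊥) ↔ (¬ (⊥ : M) ≤ x ∨ ¬ P x) :=
      iff_of_eq (congrArg ULift.down key)
    have hPx : P x := by
      by_contra hc
      have := key'.mpr (Or.inr hc)
      simp [hPbot] at this
    obtain ⟨l, h1, h2⟩ := hPx
    exact ⟨l, le_antisymm h2 h1⟩
  · rintro ⟨l, rfl⟩
    exact hcoeq l
end

section
/- Let M and N be join-semilattices with least element ⊥ and f, g : M → N B-module morphisms satisfying: (a) for all x, y ∈ M, f(x) ⊔ g(y) = f(y) ⊔ g(x) implies x = y; and (b) every n ∈ N can be written as n = f(x) ⊔ g(y) for some x, y ∈ M with g(x) ⊔ f(y) = ⊥. Then there exist a unique pair of sub-B-modules N₁, N₂ ⊆ N such that the map N₁ × N₂ → N, (n₁, n₂) ↦ n₁ ⊔ n₂, is an isomorphism of B-modules, and a unique isomorphism of B-modules α : M → N, such that f = ι₁ ∘ p₁ ∘ α and g = ι₂ ∘ p₂ ∘ α, where p₁, p₂ : N → Nⱼ are the projections determined by the decomposition and ιⱼ : Nⱼ → N the inclusions. Moreover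 N₁ = f(M) and N₂ = g(M). -/
/-!
Strictly exact sequences `0 ⇒ M ⇒(f,g) N ⇒ 0` in `Bmod²` are exactly the
isomorphisms: if (a) `f x ⊔ g y = f y ⊔ g x → x = y` and (b) every `n ∈ N`
is of the form `f x ⊔ g y` with `g x ⊔ f y = ⊥`, then there is a unique
decomposition `N = N₁ × N₂` (a pair of sub-`𝔹`-modules such that
`(n₁, n₂) ↦ n₁ ⊔ n₂` is an isomorphism) and a unique `𝔹`-module isomorphism
`α : M → N` with `f = ι₁ ∘ p₁ ∘ α` and `g = ι₂ ∘ p₂ ∘ α` (equivalently: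
`f x ∈ N₁`, `g x ∈ N₂` and `α x = f x ⊔ g x`); moreover `N₁ = f(M)` and
`N₂ = g(M)`.
-/

/-- `d = (N₁, N₂, α)` is a decomposition of `N` realizing `(f, g)` as in
Proposition `iso4` of the paper. -/
def IsDecomposition {M N : Type*} [SemilatticeSup M] [OrderBot M]
    [SemilatticeSup N] [OrderBot N] (f g : SupBotHom M N)
    (d : Set N × Set N × (M → N)) : Prop :=
  (⊥ ∈ d.1 ∧ ∀ a ∈ d.1, ∀ b ∈ d.1, a ⊔ b ∈ d.1) ∧
  (⊥ ∈ d.2.1 ∧ ∀ a ∈ d.2.1, ∀ b ∈ d.2.1, a ⊔ b ∈ d.2.1) ∧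
  Function.Bijective (fun p : d.1 × d.2.1 => (p.1 : N) ⊔ (p.2 : N)) ∧
  Function.Bijective d.2.2 ∧
  (∀ x y : M, d.2.2 (x ⊔ y) = d.2.2 x ⊔ d.2.2 y) ∧
  d.2.2 ⊥ = ⊥ ∧
  (∀ x : M, f x ∈ d.1) ∧ (∀ x : M, g x ∈ d.2.1) ∧
  (∀ x : M, d.2.2 x = f x ⊔ g x)


section Aux

variable {M N : Type*} [SemilatticeSup M] [OrderBot M]
    [SemilatticeSup N] [OrderBot N]

private lemma sup_absorb₁ {N : Type*} [SemilatticeSup N] {x y h : N} (H : h ≤ x ⊔ y) :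
    (x ⊔ h) ⊔ y = x ⊔ y := by
  calc (x ⊔ h) ⊔ y = (x ⊔ y) ⊔ h := by ac_rfl
    _ = x ⊔ y := sup_eq_left.mpr H

private lemma sup_absorb₂ {N : Type*} [SemilatticeSup N] {x y h : N} (H : h ≤ x ⊔ y) :
    (h ⊔ x) ⊔ y = x ⊔ y := by
  calc (h ⊔ x) ⊔ y = (x ⊔ y) ⊔ h := by ac_rfl
    _ = x ⊔ y := sup_eq_left.mpr H

private lemma sup_absorb₃ {N : Type*} [SemilatticeSup N] {x y h : N} (H : h ≤ x ⊔ y) :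
    x ⊔ (y ⊔ h) = x ⊔ y := by
  calc x ⊔ (y ⊔ h) = (x ⊔ y) ⊔ h := by ac_rfl
    _ = x ⊔ y := sup_eq_left.mpr H

private lemma sup_absorb₄ {N : Type*} [SemilatticeSup N] {x y h : N} (H : h ≤ x ⊔ y) :
    x ⊔ (h ⊔ y) = x ⊔ y := by
  calc x ⊔ (h ⊔ y) = (x ⊔ y) ⊔ h := by ac_rfl
    _ = x ⊔ y := sup_eq_left.mpr H

private lemma alpha_inj (f g : SupBotHom M N)
    (ha : ∀ x y : M, f x ⊔ g y = f y ⊔ g x → x = y)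
    {m m' : M} (h : f m ⊔ g m = f m' ⊔ g m') : m = m' := by
  have hf' : f m' ≤ f m ⊔ g m := by rw [h]; exact le_sup_left
  have hg' : g m' ≤ f m ⊔ g m := by rw [h]; exact le_sup_right
  have hf : f m ≤ f m' ⊔ g m' := by rw [← h]; exact le_sup_left
  have hg : g m ≤ f m' ⊔ g m' := by rw [← h]; exact le_sup_right
  have h1 : m ⊔ m' = m := by
    apply ha
    have e1 : f (m ⊔ m') ⊔ g m = f m ⊔ g m := by
      rw [map_sup]; exact sup_absorb₁ hf' 
    have e2 : f m ⊔ g (m ⊔ m') = f m ⊔ g m := by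
      rw [map_sup]; exact sup_absorb₃ hg' 
    rw [e1, e2]
  have h2 : m ⊔ m' = m' := by
    apply ha
    have e1 : f (m ⊔ m') ⊔ g m' = f m' ⊔ g m' := by
      rw [map_sup]; exact sup_absorb₂ hf
    have e2 : f m' ⊔ g (m ⊔ m') = f m' ⊔ g m' := by
      rw [map_sup]; exact sup_absorb₄ hg
    rw [e1, e2]
  rw [← h1, h2]

private lemma decomp_uniq (f g : SupBotHom M N)
    (ha : ∀ x y : M, f x ⊔ g y = f y ⊔ g x → x = y)
    {x y x' y' : M} (hx : g x = ⊥) (hy : f y = ⊥) (hx' : g x' = ⊥) (hy' : f y' = ⊥)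
    (h : f x ⊔ g y = f x' ⊔ g y') : f x = f x' ∧ g y = g y' := by
  have key : x ⊔ y' = x' ⊔ y := by
    apply ha
    simp only [map_sup, hx, hy, hx', hy', sup_bot_eq, bot_sup_eq]
    exact h
  constructor
  · have := congrArg f key
    simpa [map_sup, hy, hy'] using this
  · have := congrArg g key
    simpa [map_sup, hx, hx'] using this.symm

private lemma purity (f g : SupBotHom M N)
    (ha : ∀ x y : M, f x ⊔ g y = f y ⊔ g x → x = y)
    (hb : ∀ n : N, ∃ x y : M, g x ⊔ f y = ⊥ ∧ n = f x ⊔ g y)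
    (u : M) : ∃ a d : M, g a = ⊥ ∧ f d = ⊥ ∧ f u = f a ∧ g u = g d := by
  obtain ⟨a, b, hab, hfu⟩ := hb (f u)
  obtain ⟨c, d, hcd, hgu⟩ := hb (g u)
  have hga : g a = ⊥ := by simpa using le_antisymm (hab ▸ le_sup_left) bot_le
  have hfb : f b = ⊥ := by simpa using le_antisymm (hab ▸ le_sup_right) bot_le
  have hgc : g c = ⊥ := by simpa using le_antisymm (hcd ▸ le_sup_left) bot_le
  have hfd : f d = ⊥ := by simpa using le_antisymm (hcd ▸ le_sup_right) bot_le
  have hfa : f a ≤ f u := by rw [hfu]; exact le_sup_left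
  have hgb : g b ≤ f u := by rw [hfu]; exact le_sup_right
  have hfc : f c ≤ g u := by rw [hgu]; exact le_sup_left
  have hgd : g d ≤ g u := by rw [hgu]; exact le_sup_right
  -- a, b, c, d ≤ u
  have hA : ∀ t : M, f t ≤ f u ⊔ g u → g t ≤ f u ⊔ g u → t ≤ u := by
    intro t hft hgt
    have : u ⊔ t = u := by
      apply ha
      have e1 : f (u ⊔ t) ⊔ g u = f u ⊔ g u := by
        rw [map_sup]; exact sup_absorb₁ hft
      have e2 : f u ⊔ g (u ⊔ t) = f u ⊔ g u := by
        rw [map_sup]; exact sup_absorb₃ hgt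
      rw [e1, e2]
    exact sup_eq_left.mp this
  have hau : a ≤ u := hA a (hfa.trans le_sup_left) (by rw [hga]; exact bot_le)
  have hbu : b ≤ u := hA b (by rw [hfb]; exact bot_le) (hgb.trans le_sup_left)
  have hcu : c ≤ u := hA c (hfc.trans le_sup_right) (by rw [hgc]; exact bot_le)
  have hdu : d ≤ u := hA d (by rw [hfd]; exact bot_le) (hgd.trans le_sup_right)
  -- u = a ⊔ b ⊔ c ⊔ d
  have h1 : f (a ⊔ b ⊔ c ⊔ d) = f a ⊔ f c := by simp [map_sup, hfb, hfd]
  have h2 : g (a ⊔ b ⊔ c ⊔ d) = g b ⊔ g d := by simp [map_sup, hga, hgc]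
  have hs : u = a ⊔ b ⊔ c ⊔ d := by
    apply alpha_inj f g ha
    rw [h1, h2, hfu, hgu]
    ac_rfl
  have hfus : f u = f a ⊔ f c := by rw [hs]; exact h1
  have hgus : g u = g b ⊔ g d := by rw [hs]; exact h2
  have hfc2 : f c ≤ f a ⊔ g b := by rw [← hfu, hfus]; exact le_sup_right
  have hgb2 : g b ≤ f c ⊔ g d := by rw [← hgu, hgus]; exact le_sup_left
  -- c ≤ a ⊔ b, hence f c ≤ f a
  have hcab : c ≤ a ⊔ b := by
    have : (a ⊔ b) ⊔ c = a ⊔ b := by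
      apply ha
      simp only [map_sup, hga, hgc, hfb, sup_bot_eq, bot_sup_eq]
      exact sup_absorb₁ hfc2
    exact sup_eq_left.mp this
  have hfca : f c ≤ f a := by
    have e1 : f c ⊔ f (a ⊔ b) = f (a ⊔ b) := by rw [← map_sup, sup_eq_right.mpr hcab]
    have e2 : f (a ⊔ b) = f a := by simp [map_sup, hfb]
    rw [e2] at e1
    exact sup_eq_right.mp e1
  -- b ≤ c ⊔ d, hence g b ≤ g d
  have hbcd : b ≤ c ⊔ d := by
    have : (c ⊔ d) ⊔ b = c ⊔ d := by
      apply ha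
      simp only [map_sup, hfb, hgc, hfd, sup_bot_eq, bot_sup_eq]
      exact (sup_absorb₃ hgb2).symm
    exact sup_eq_left.mp this
  have hgbd : g b ≤ g d := by
    have e1 : g b ⊔ g (c ⊔ d) = g (c ⊔ d) := by rw [← map_sup, sup_eq_right.mpr hbcd]
    have e2 : g (c ⊔ d) = g d := by simp [map_sup, hgc]
    rw [e2] at e1
    exact sup_eq_right.mp e1
  exact ⟨a, d, hga, hfd, by rw [hfus]; exact sup_eq_left.mpr hfca,
    by rw [hgus]; exact sup_eq_right.mpr hgbd⟩

end Aux

theorem stmt7 {M N : Type*} [SemilatticeSup M] [OrderBot M]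
    [SemilatticeSup N] [OrderBot N]
    (f g : SupBotHom M N)
    (ha : ∀ x y : M, f x ⊔ g y = f y ⊔ g x → x = y)
    (hb : ∀ n : N, ∃ x y : M, g x ⊔ f y = ⊥ ∧ n = f x ⊔ g y) :
    (∃! d : Set N × Set N × (M → N), IsDecomposition f g d) ∧
    (∀ d : Set N × Set N × (M → N), IsDecomposition f g d →
      d.1 = Set.range f ∧ d.2.1 = Set.range g) := by
  -- the sets of any decomposition are forced
  have hsets : ∀ d : Set N × Set N × (M → N), IsDecomposition f g d →
      d.1 = Set.range f ∧ d.2.1 = Set.range g := by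
    intro d hd
    obtain ⟨⟨h1b, -⟩, ⟨h2b, -⟩, ⟨hpinj, -⟩, ⟨-, hasurj⟩, -, -, hf1, hg2, hadef⟩ := hd
    constructor
    · apply Set.Subset.antisymm
      · intro n hn
        obtain ⟨m, hm⟩ := hasurj n
        rw [hadef] at hm
        obtain ⟨a, b, hga, hfb, hfm, hgm⟩ := purity f g ha hb m
        have hn' : n = f a ⊔ g b := by rw [← hm, hfm, hgm]
        have hkey : ((⟨n, hn⟩, ⟨⊥, h2b⟩) : d.1 × d.2.1) = (⟨f a, hf1 a⟩, ⟨g b, hg2 b⟩) := by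
          apply hpinj
          simpa using hn'
        have h1 : n = f a := by simpa using congrArg (fun p : d.1 × d.2.1 => (p.1 : N)) hkey
        exact ⟨a, h1.symm⟩
      · rintro _ ⟨x, rfl⟩; exact hf1 x
    · apply Set.Subset.antisymm
      · intro n hn
        obtain ⟨m, hm⟩ := hasurj n
        rw [hadef] at hm
        obtain ⟨a, b, hga, hfb, hfm, hgm⟩ := purity f g ha hb m
        have hn' : n = f a ⊔ g b := by rw [← hm, hfm, hgm]
        have hkey : ((⟨⊥, h1b⟩, ⟨n, hn⟩) : d.1 × d.2.1) = (⟨f a, hf1 a⟩, ⟨g b, hg2 b⟩) := by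
          apply hpinj
          simpa using hn'
        have h1 : n = g b := by simpa using congrArg (fun p : d.1 × d.2.1 => (p.2 : N)) hkey
        exact ⟨b, h1.symm⟩
      · rintro _ ⟨x, rfl⟩; exact hg2 x
  -- the canonical decomposition
  have hmain : IsDecomposition f g (Set.range f, Set.range g, fun x => f x ⊔ g x) := by
    unfold IsDecomposition
    refine ⟨⟨⟨⊥, map_bot f⟩, ?_⟩, ⟨⟨⊥, map_bot g⟩, ?_⟩, ⟨?_, ?_⟩, ⟨?_, ?_⟩, ?_, ?_, ?_, ?_, ?_⟩
    · rintro _ ⟨x, rfl⟩ _ ⟨y, rfl⟩; exact ⟨x ⊔ y, map_sup f x y⟩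
    · rintro _ ⟨x, rfl⟩ _ ⟨y, rfl⟩; exact ⟨x ⊔ y, map_sup g x y⟩
    · -- pairing injective
      rintro ⟨⟨n1, hn1⟩, ⟨n2, hn2⟩⟩ ⟨⟨n1', hn1'⟩, ⟨n2', hn2'⟩⟩ hpq
      obtain ⟨x, rfl⟩ := hn1
      obtain ⟨y, rfl⟩ := hn2
      obtain ⟨x', rfl⟩ := hn1'
      obtain ⟨y', rfl⟩ := hn2'
      dsimp at hpq
      obtain ⟨a, -, hga, -, hfa, -⟩ := purity f g ha hb x
      obtain ⟨-, b, -, hfb, -, hgb⟩ := purity f g ha hb y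
      obtain ⟨a', -, hga', -, hfa', -⟩ := purity f g ha hb x'
      obtain ⟨-, b', -, hfb', -, hgb'⟩ := purity f g ha hb y'
      have hpq' : f a ⊔ g b = f a' ⊔ g b' := by
        rw [← hfa, ← hgb, ← hfa', ← hgb']; exact hpq
      obtain ⟨e1, e2⟩ := decomp_uniq f g ha hga hfb hga' hfb' hpq'
      have ex : f x = f x' := by rw [hfa, hfa', e1]
      have ey : g y = g y' := by rw [hgb, hgb', e2]
      simp only [Prod.mk.injEq, Subtype.mk.injEq]
      exact ⟨Subtype.ext ex, Subtype.ext ey⟩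
    · -- pairing surjective
      intro n
      obtain ⟨x, y, -, hn⟩ := hb n
      exact ⟨(⟨f x, ⟨x, rfl⟩⟩, ⟨g y, ⟨y, rfl⟩⟩), hn.symm⟩
    · -- α injective
      intro m m' h
      exact alpha_inj f g ha h
    · -- α surjective
      intro n
      obtain ⟨x, y, hxy, hn⟩ := hb n
      have hgx : g x = ⊥ := by simpa using le_antisymm (hxy ▸ le_sup_left) bot_le
      have hfy : f y = ⊥ := by simpa using le_antisymm (hxy ▸ le_sup_right) bot_le
      refine ⟨x ⊔ y, ?_⟩
      show f (x ⊔ y) ⊔ g (x ⊔ y) = n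
      rw [map_sup, map_sup, hfy, hgx, sup_bot_eq, bot_sup_eq]
      exact hn.symm
    · intro x y
      show f (x ⊔ y) ⊔ g (x ⊔ y) = (f x ⊔ g x) ⊔ (f y ⊔ g y)
      rw [map_sup, map_sup]
      ac_rfl
    · show f ⊥ ⊔ g ⊥ = ⊥
      simp
    · exact fun x => ⟨x, rfl⟩
    · exact fun x => ⟨x, rfl⟩
    · exact fun x => rfl
  refine ⟨⟨(Set.range f, Set.range g, fun x => f x ⊔ g x), hmain, ?_⟩, hsets⟩
  intro d hd
  obtain ⟨e1, e2⟩ := hsets d hd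
  have e3 : d.2.2 = fun x => f x ⊔ g x := funext fun x => hd.2.2.2.2.2.2.2.2 x
  obtain ⟨D1, D2, D3⟩ := d
  simp only at e1 e2 e3
  rw [e1, e2, e3]
end

section
/- Let M and N be join-semilattices with least element ⊥ and f, g : M → N B-module morphisms. The following are equivalent: (1) the map M × M → N × N, (x, y) ↦ (f(x) ⊔ g(y), g(x) ⊔ f(y)), is injective; (2) for every join-semilattice L with ⊥ and all B-module morphisms α, β, α', β' : L → M, if f∘α ⊔ g∘β = f∘α' ⊔ g∘β' and f∘β ⊔ g∘α = f∘β' ⊔ g∘α' (pointwise joins of morphisms), then α = α' and β = β' (i.e., the pair (f,g) is a monomorphism in Bmod²). Moreover, these conditions imply that f(x) ⊔ g(y) = g(x) ⊔ f(y) forces x = y. -/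
universe u

/-- The `SupBotHom` from `ULift Bool` to `M` sending `⊥` to `⊥` and `⊤` to `x`. -/
def pointHom {M : Type u} [SemilatticeSup M] [OrderBot M] (x : M) :
    SupBotHom (ULift.{u} Bool) M where
  toFun b := if b.down then x else ⊥
  map_sup' a b := by
    cases a; cases b
    rename_i a b
    cases a <;> cases b <;> simp
  map_bot' := rfl

/-!
Characterization of monomorphisms in `Bmod²`: the pair `(f, g)` of
`𝔹`-module morphisms `M → N` is a monomorphism (condition (2)) if and only if
the map `(x, y) ↦ (f x ⊔ g y, g x ⊔ f y)` is injective (condition (1));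
moreover these conditions imply that `f x ⊔ g y = g x ⊔ f y` forces `x = y`
(strict exactness of `0 ⇒ M ⇒ N` at `M`).
-/

theorem stmt8 {M N : Type u} [SemilatticeSup M] [OrderBot M]
    [SemilatticeSup N] [OrderBot N] (f g : SupBotHom M N) :
    ((Function.Injective fun p : M × M => (f p.1 ⊔ g p.2, g p.1 ⊔ f p.2)) ↔
      ∀ (L : Type u) [SemilatticeSup L] [OrderBot L]
        (α β α' β' : SupBotHom L M),
        (∀ l : L, f (α l) ⊔ g (β l) = f (α' l) ⊔ g (β' l)) →
        (∀ l : L, f (β l) ⊔ g (α l) = f (β' l) ⊔ g (α' l)) →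
        α = α' ∧ β = β') ∧
    ((Function.Injective fun p : M × M => (f p.1 ⊔ g p.2, g p.1 ⊔ f p.2)) →
      ∀ x y : M, f x ⊔ g y = g x ⊔ f y → x = y) := by
  constructor
  · constructor
    · intro hinj L _ _ α β α' β' h1 h2
      have key : ∀ l : L, α l = α' l ∧ β l = β' l := by
        intro l
        have := hinj (a₁ := (α l, β l)) (a₂ := (α' l, β' l))
          (by simp only [Prod.mk.injEq]; exact ⟨h1 l, by rw [sup_comm (g (α l)), sup_comm (g (α' l))]; exact h2 l⟩)
        exact ⟨congrArg Prod.fst this, congrArg Prod.snd this⟩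
      exact ⟨SupBotHom.ext fun l => (key l).1, SupBotHom.ext fun l => (key l).2⟩
    · intro h p q hpq
      simp only [Prod.mk.injEq] at hpq
      have := h (ULift.{u} Bool) (pointHom p.1) (pointHom p.2)
        (pointHom q.1) (pointHom q.2)
        (by intro l; cases l; rename_i b; cases b <;>
          simp [pointHom, hpq.1])
        (by intro l; cases l; rename_i b; cases b <;> simp [pointHom]
            rw [sup_comm (f p.2), sup_comm (f q.2)]; exact hpq.2)
      have h1 : p.1 = q.1 := by
        have := congrArg (fun (h : SupBotHom (ULift Bool) M) => h ⟨true⟩) this.1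
        simpa [pointHom] using this
      have h2 : p.2 = q.2 := by
        have := congrArg (fun (h : SupBotHom (ULift Bool) M) => h ⟨true⟩) this.2
        simpa [pointHom] using this
      exact Prod.ext h1 h2
  · intro hinj x y hxy
    have := hinj (a₁ := (x, y)) (a₂ := (y, x))
      (by simp only [Prod.mk.injEq]
          refine ⟨hxy.trans (sup_comm _ _), ?_⟩
          rw [← hxy, sup_comm])
    exact congrArg Prod.fst this
end

section
/- Let L and M be join-semilattices with least element ⊥ and f, g : L → M B-module morphisms. The following are equivalent: (1) {(f(x) ⊔ g(y), f(y) ⊔ g(x)) | x, y ∈ L} = M × M; (2) for every join-semilattice X with ⊥ and all B-module morphisms ψ₁, ψ₂, ψ₁', ψ₂' : M → X, if ψ₁∘f ⊔ ψ₂∘g = ψ₁'∘f ⊔ ψ₂'∘g and ψ₁∘g ⊔ ψ₂∘f = ψ₁'∘g ⊔ ψ₂'∘f (pointwise joins of morphisms), then ψ₁ = ψ₁' and ψ₂ = ψ₂' (i.e., the pair (f,g) is an epimorphism in Bmod²). -/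
universe u

namespace Stmt9Aux

variable {M : Type u} [SemilatticeSup M] [OrderBot M]

/-- The "complement of principal ideal" hom `p ↦ {⋆ | ¬ p ≤ c}`. -/
def PhiA (c : M × M) : SupBotHom (M × M) (Set PUnit.{u+1}) where
  toFun p := {_x | ¬ p ≤ c}
  map_sup' a b := by
    ext x
    simp only [Set.mem_setOf_eq, sup_le_iff, Set.sup_eq_union, Set.mem_union]
    tauto
  map_bot' := by
    ext x
    simp

/-- The variant saturated with respect to a subset `S`. -/
def PhiB (S : Set (M × M)) (c : M × M)
    (hS : ∀ a b, a ∈ S → b ∈ S → a ⊔ b ∈ S)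
    (h0 : ∃ s ∈ S, s ≤ c) : SupBotHom (M × M) (Set PUnit.{u+1}) where
  toFun p := {_x | ¬ ∃ s ∈ S, p ≤ s ∧ s ≤ c}
  map_sup' a b := by
    ext x
    simp only [Set.mem_setOf_eq, Set.sup_eq_union, Set.mem_union]
    constructor
    · intro h
      by_contra hcon
      push_neg at hcon
      obtain ⟨⟨s₁, hs₁, hle₁, hsc₁⟩, ⟨s₂, hs₂, hle₂, hsc₂⟩⟩ := hcon
      exact h ⟨s₁ ⊔ s₂, hS _ _ hs₁ hs₂, sup_le_sup hle₁ hle₂, sup_le hsc₁ hsc₂⟩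
    · rintro (h | h) ⟨s, hs, hle, hsc⟩
      · exact h ⟨s, hs, le_trans le_sup_left hle, hsc⟩
      · exact h ⟨s, hs, le_trans le_sup_right hle, hsc⟩
  map_bot' := by
    ext x
    obtain ⟨s, hs, hsc⟩ := h0
    simp only [Set.mem_setOf_eq, Set.bot_eq_empty, Set.mem_empty_iff_false, iff_false, not_not]
    exact ⟨s, hs, bot_le, hsc⟩

theorem phi_agree (S : Set (M × M)) (c : M × M)
    (hS : ∀ a b, a ∈ S → b ∈ S → a ⊔ b ∈ S) (h0 : ∃ s ∈ S, s ≤ c)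
    {s₀ : M × M} (hs₀ : s₀ ∈ S) :
    PhiA c s₀ = PhiB S c hS h0 s₀ := by
  ext x
  simp only [PhiA, PhiB, SupBotHom.coe_mk, SupHom.coe_mk, Set.mem_setOf_eq]
  constructor
  · rintro h ⟨s, hs, hle, hsc⟩
    exact h (le_trans hle hsc)
  · intro h hle
    exact h ⟨s₀, hs₀, le_refl _, hle⟩

theorem phiA_self (c : M × M) : PhiA c c = (⊥ : Set PUnit.{u+1}) := by
  ext x
  simp [PhiA]

theorem phiB_self (S : Set (M × M)) (c : M × M)
    (hS : ∀ a b, a ∈ S → b ∈ S → a ⊔ b ∈ S) (h0 : ∃ s ∈ S, s ≤ c)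
    (hc : c ∉ S) : PhiB S c hS h0 c = (Set.univ : Set PUnit.{u+1}) := by
  ext x
  simp only [PhiB, SupBotHom.coe_mk, SupHom.coe_mk, Set.mem_setOf_eq, Set.mem_univ, iff_true]
  rintro ⟨s, hs, hle, hsc⟩
  exact hc (le_antisymm hsc hle ▸ hs)

/-- The left coordinate embedding `m ↦ (m, ⊥)`. -/
def inl : SupBotHom M (M × M) where
  toFun m := (m, ⊥)
  map_sup' a b := by ext <;> simp
  map_bot' := rfl

/-- The right coordinate embedding `m ↦ (⊥, m)`. -/
def inr : SupBotHom M (M × M) where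
  toFun m := (⊥, m)
  map_sup' a b := by ext <;> simp
  map_bot' := rfl

end Stmt9Aux

/-!
Characterization of epimorphisms in `Bmod²`: for `𝔹`-module morphisms
`f, g : L → M`, one has `B(f, g) = M × M` — i.e. every pair `(m₁, m₂)` is of
the form `(f x ⊔ g y, f y ⊔ g x)` — if and only if the pair `(f, g)` is an
epimorphism in `Bmod²`.
-/

theorem stmt9 {L M : Type u} [SemilatticeSup L] [OrderBot L]
    [SemilatticeSup M] [OrderBot M] (f g : SupBotHom L M) :
    (∀ m₁ m₂ : M, ∃ x y : L, m₁ = f x ⊔ g y ∧ m₂ = f y ⊔ g x) ↔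
    ∀ (X : Type u) [SemilatticeSup X] [OrderBot X]
      (ψ₁ ψ₂ ψ₁' ψ₂' : SupBotHom M X),
      (∀ l : L, ψ₁ (f l) ⊔ ψ₂ (g l) = ψ₁' (f l) ⊔ ψ₂' (g l)) →
      (∀ l : L, ψ₁ (g l) ⊔ ψ₂ (f l) = ψ₁' (g l) ⊔ ψ₂' (f l)) →
      ψ₁ = ψ₁' ∧ ψ₂ = ψ₂' := by
  constructor
  · intro h X _ _ ψ₁ ψ₂ ψ₁' ψ₂' h1 h2
    have key : ∀ m₁ m₂ : M, ψ₁ m₁ ⊔ ψ₂ m₂ = ψ₁' m₁ ⊔ ψ₂' m₂ := by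
      intro m₁ m₂
      obtain ⟨x, y, hx, hy⟩ := h m₁ m₂
      subst hx; subst hy
      rw [map_sup, map_sup, map_sup, map_sup]
      calc ψ₁ (f x) ⊔ ψ₁ (g y) ⊔ (ψ₂ (f y) ⊔ ψ₂ (g x))
          = (ψ₁ (f x) ⊔ ψ₂ (g x)) ⊔ (ψ₁ (g y) ⊔ ψ₂ (f y)) := by ac_rfl
        _ = (ψ₁' (f x) ⊔ ψ₂' (g x)) ⊔ (ψ₁' (g y) ⊔ ψ₂' (f y)) := by
            rw [h1 x, h2 y]
        _ = ψ₁' (f x) ⊔ ψ₁' (g y) ⊔ (ψ₂' (f y) ⊔ ψ₂' (g x)) := by ac_rfl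
    constructor
    · ext m
      have := key m ⊥
      simpa using this
    · ext m
      have := key ⊥ m
      simpa using this
  · intro h m₁ m₂
    by_contra hcon
    set S : Set (M × M) := {p | ∃ x y : L, p.1 = f x ⊔ g y ∧ p.2 = f y ⊔ g x} with hSdef
    have hmem : (m₁, m₂) ∉ S := hcon
    have hS : ∀ a b, a ∈ S → b ∈ S → a ⊔ b ∈ S := by
      rintro a b ⟨x, y, hx, hy⟩ ⟨x', y', hx', hy'⟩
      refine ⟨x ⊔ x', y ⊔ y', ?_, ?_⟩
      · show a.1 ⊔ b.1 = _
        rw [hx, hx', map_sup, map_sup]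
        exact sup_sup_sup_comm _ _ _ _
      · show a.2 ⊔ b.2 = _
        rw [hy, hy', map_sup, map_sup]
        exact sup_sup_sup_comm _ _ _ _
    have hfg : ∀ l : L, (f l, g l) ∈ S := by
      intro l
      exact ⟨l, ⊥, by simp, by simp⟩
    have hgf : ∀ l : L, (g l, f l) ∈ S := by
      intro l
      exact ⟨⊥, l, by simp, by simp⟩
    have hbotS : (⊥ : M × M) ∈ S := by
      refine ⟨⊥, ⊥, by simp, by simp⟩
    have hsplit : (m₁, ⊥) ∉ S ∨ ((⊥ : M), m₂) ∉ S := by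
      by_contra hcc
      push_neg at hcc
      have := hS _ _ hcc.1 hcc.2
      simp only [Prod.sup_def, sup_bot_eq, bot_sup_eq] at this
      exact hmem this
    rcases hsplit with hc | hc
    · set c : M × M := (m₁, ⊥) with hcdef
      have h0 : ∃ s ∈ S, s ≤ c := ⟨⊥, hbotS, bot_le⟩
      set A := Stmt9Aux.PhiA c with hA
      set B := Stmt9Aux.PhiB S c hS h0 with hB
      have hcontr := h (Set PUnit.{u+1})
        (A.comp Stmt9Aux.inl) (A.comp Stmt9Aux.inr)
        (B.comp Stmt9Aux.inl) (B.comp Stmt9Aux.inr)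
        (by
          intro l
          have e1 : ∀ (Φ : SupBotHom (M × M) (Set PUnit.{u+1})),
              Φ.comp Stmt9Aux.inl (f l) ⊔ Φ.comp Stmt9Aux.inr (g l) = Φ (f l, g l) := by
            intro Φ
            have : ((f l, (⊥ : M)) ⊔ ((⊥ : M), g l)) = (f l, g l) := by
              simp [Prod.sup_def]
            rw [SupBotHom.comp_apply, SupBotHom.comp_apply, ← map_sup]
            show Φ ((f l, ⊥) ⊔ (⊥, g l)) = _
            rw [this]
          rw [e1 A, e1 B]
          exact Stmt9Aux.phi_agree S c hS h0 (hfg l))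
        (by
          intro l
          have e1 : ∀ (Φ : SupBotHom (M × M) (Set PUnit.{u+1})),
              Φ.comp Stmt9Aux.inl (g l) ⊔ Φ.comp Stmt9Aux.inr (f l) = Φ (g l, f l) := by
            intro Φ
            have : ((g l, (⊥ : M)) ⊔ ((⊥ : M), f l)) = (g l, f l) := by
              simp [Prod.sup_def]
            rw [SupBotHom.comp_apply, SupBotHom.comp_apply, ← map_sup]
            show Φ ((g l, ⊥) ⊔ (⊥, f l)) = _
            rw [this]
          rw [e1 A, e1 B]
          exact Stmt9Aux.phi_agree S c hS h0 (hgf l))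
      have heq := DFunLike.congr_fun hcontr.1 m₁
      have hl : A.comp Stmt9Aux.inl m₁ = (⊥ : Set PUnit.{u+1}) := by
        show A (m₁, ⊥) = _
        rw [← hcdef]
        exact Stmt9Aux.phiA_self c
      have hr : B.comp Stmt9Aux.inl m₁ = (Set.univ : Set PUnit.{u+1}) := by
        show B (m₁, ⊥) = _
        rw [← hcdef]
        exact Stmt9Aux.phiB_self S c hS h0 hc
      rw [hl, hr] at heq
      have : PUnit.unit ∈ (⊥ : Set PUnit.{u+1}) := heq ▸ Set.mem_univ _
      exact this
    · set c : M × M := ((⊥ : M), m₂) with hcdef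
      have h0 : ∃ s ∈ S, s ≤ c := ⟨⊥, hbotS, bot_le⟩
      set A := Stmt9Aux.PhiA c with hA
      set B := Stmt9Aux.PhiB S c hS h0 with hB
      have hcontr := h (Set PUnit.{u+1})
        (A.comp Stmt9Aux.inl) (A.comp Stmt9Aux.inr)
        (B.comp Stmt9Aux.inl) (B.comp Stmt9Aux.inr)
        (by
          intro l
          have e1 : ∀ (Φ : SupBotHom (M × M) (Set PUnit.{u+1})),
              Φ.comp Stmt9Aux.inl (f l) ⊔ Φ.comp Stmt9Aux.inr (g l) = Φ (f l, g l) := by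
            intro Φ
            have : ((f l, (⊥ : M)) ⊔ ((⊥ : M), g l)) = (f l, g l) := by
              simp [Prod.sup_def]
            rw [SupBotHom.comp_apply, SupBotHom.comp_apply, ← map_sup]
            show Φ ((f l, ⊥) ⊔ (⊥, g l)) = _
            rw [this]
          rw [e1 A, e1 B]
          exact Stmt9Aux.phi_agree S c hS h0 (hfg l))
        (by
          intro l
          have e1 : ∀ (Φ : SupBotHom (M × M) (Set PUnit.{u+1})),
              Φ.comp Stmt9Aux.inl (g l) ⊔ Φ.comp Stmt9Aux.inr (f l) = Φ (g l, f l) := by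
            intro Φ
            have : ((g l, (⊥ : M)) ⊔ ((⊥ : M), f l)) = (g l, f l) := by
              simp [Prod.sup_def]
            rw [SupBotHom.comp_apply, SupBotHom.comp_apply, ← map_sup]
            show Φ ((g l, ⊥) ⊔ (⊥, f l)) = _
            rw [this]
          rw [e1 A, e1 B]
          exact Stmt9Aux.phi_agree S c hS h0 (hgf l))
      have heq := DFunLike.congr_fun hcontr.2 m₂
      have hl : A.comp Stmt9Aux.inr m₂ = (⊥ : Set PUnit.{u+1}) := by
        show A (⊥, m₂) = _
        rw [← hcdef]
        exact Stmt9Aux.phiA_self c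
      have hr : B.comp Stmt9Aux.inr m₂ = (Set.univ : Set PUnit.{u+1}) := by
        show B (⊥, m₂) = _
        rw [← hcdef]
        exact Stmt9Aux.phiB_self S c hS h0 hc
      rw [hl, hr] at heq
      have : PUnit.unit ∈ (⊥ : Set PUnit.{u+1}) := heq ▸ Set.mem_univ _
      exact this
end

section
/- Let M be a join-semilattice with least element ⊥ and N ⊆ M a sub-join-semilattice containing ⊥. On M × M define (x, y) ∼ (x', y') iff f(x) ⊔ g(y) = f(x') ⊔ g(y') for every join-semilattice X with ⊥ and every pair (f, g) of B-module morphisms M → X with f|_N = g|_N. Let Q := (M × M)/∼ (a B-module under componentwise joins) and let γ₁, γ₂ : M → Q be γ₁(x) = [(x, ⊥)], γ₂(y) = [( ⊥, y)]. Then: (i) γ₁ and γ₂ are injective B-module morphisms, and γ₁(M) ∩ γ₂(M) = γ₁(N) = γ₂(N); (ii) for every join-semilattice X with ⊥, the assignment sending a pair (f, g) of B-module morphisms M → X with f|_N = g|_N to the B-module morphism Q → X given by [(x, y)] ↦ f(x) ⊔ g(y) is a bijection onto the set of B-module morphisms Q → X, with inverse ρ ↦ (ρ∘γ₁, ρ∘γ₂).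 -/
universe u

/-!
The cokernel pair of an inclusion `N ⊆ M` of `𝔹`-modules.  `Q` together with
`π : M × M → Q` realizes the quotient of `M × M` by the relation
`(x, y) ∼ (x', y') ↔ f x ⊔ g y = f x' ⊔ g y'` for all pairs `(f, g)` of
morphisms agreeing on `N`.  With `γ₁ x = π (x, ⊥)` and `γ₂ y = π (⊥, y)`:
(i) `γ₁, γ₂` are injective and `γ₁(M) ∩ γ₂(M) = γ₁(N) = γ₂(N)`;
(ii) for every `𝔹`-module `X`, pairs `(f, g)` of morphisms `M → X` with
`f|_N = g|_N` correspond bijectively to morphisms `ρ : Q → X` via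
`ρ (π (x, y)) = f x ⊔ g y`, with inverse `ρ ↦ (ρ ∘ γ₁, ρ ∘ γ₂)`.
-/

namespace Stmt10Aux

variable {M : Type u} [SemilatticeSup M] [OrderBot M]

/-- one step of the congruence generated by `(n, ⊥) ∼ (⊥, n)` for `n ∈ N`. -/
def step (N : Set M) (z z' : M × M) : Prop :=
  ∃ w : M × M, ∃ n ∈ N, z = w ⊔ (n, ⊥) ∧ z' = w ⊔ (⊥, n)

def theta (N : Set M) : Setoid (M × M) := ⟨Relation.EqvGen (step N), Relation.EqvGen.is_equivalence _⟩

lemma eqv_sup_right {N : Set M} {a b : M × M} (c : M × M)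
    (h : Relation.EqvGen (step N) a b) : Relation.EqvGen (step N) (a ⊔ c) (b ⊔ c) := by
  induction h with
  | rel x y hxy =>
      obtain ⟨w, n, hn, hx, hy⟩ := hxy
      refine Relation.EqvGen.rel _ _ ⟨w ⊔ c, n, hn, ?_, ?_⟩
      · rw [hx, sup_right_comm]
      · rw [hy, sup_right_comm]
  | refl x => exact Relation.EqvGen.refl _
  | symm x y _ ih => exact Relation.EqvGen.symm _ _ ih
  | trans x y z _ _ ih1 ih2 => exact Relation.EqvGen.trans _ _ _ ih1 ih2

lemma eqv_sup {N : Set M} {a b c d : M × M}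
    (hab : Relation.EqvGen (step N) a b) (hcd : Relation.EqvGen (step N) c d) :
    Relation.EqvGen (step N) (a ⊔ c) (b ⊔ d) := by
  have h1 := eqv_sup_right c hab
  have h2 := eqv_sup_right b hcd
  rw [sup_comm c b, sup_comm d b] at h2
  exact Relation.EqvGen.trans _ _ _ h1 h2

abbrev Q0 (N : Set M) : Type u := Quotient (theta N)

abbrev mkQ (N : Set M) (z : M × M) : Q0 N := Quotient.mk (theta N) z

instance (N : Set M) : Max (Q0 N) :=
  ⟨Quotient.map₂ (· ⊔ ·) (fun _ _ h _ _ h' => eqv_sup h h')⟩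

lemma mk_sup (N : Set M) (x y : M × M) : Quotient.mk (theta N) x ⊔ Quotient.mk (theta N) y = Quotient.mk (theta N) (x ⊔ y) := rfl

instance (N : Set M) : SemilatticeSup (Q0 N) :=
  SemilatticeSup.mk'
    (fun a b => Quotient.inductionOn₂ a b fun x y => by
      rw [mk_sup, mk_sup, sup_comm])
    (fun a b c => Quotient.inductionOn₃ a b c fun x y z => by
      rw [mk_sup, mk_sup, mk_sup, mk_sup, sup_assoc])
    (fun a => Quotient.inductionOn a fun x => by rw [mk_sup, sup_idem])

instance (N : Set M) : @OrderBot (Q0 N) (instSemilatticeSupQ0 N).toLE :=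
  @OrderBot.mk (Q0 N) (instSemilatticeSupQ0 N).toLE ⟨mkQ N ⊥⟩ fun a => Quotient.inductionOn a fun x =>
    sup_eq_right.mp (show Quotient.mk (theta N) ⊥ ⊔ Quotient.mk (theta N) x = Quotient.mk (theta N) x by
      rw [mk_sup, bot_sup_eq])

lemma bot_def (N : Set M) : (⊥ : Q0 N) = mkQ N ⊥ := rfl

def F (N : Set M) : SupBotHom M (Q0 N) where
  toFun a := mkQ N (a, ⊥)
  map_sup' a b := by
    rw [mk_sup]
    simp [Prod.ext_iff]
  map_bot' := rfl

def G (N : Set M) : SupBotHom M (Q0 N) where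
  toFun a := mkQ N (⊥, a)
  map_sup' a b := by
    rw [mk_sup]
    simp [Prod.ext_iff]
  map_bot' := rfl

lemma F_eq_G (N : Set M) {n : M} (hn : n ∈ N) : F N n = G N n := by
  refine Quotient.sound (Relation.EqvGen.rel _ _ ⟨⊥, n, hn, ?_, ?_⟩) <;> simp

lemma invariant {N : Set M} (hsupN : ∀ a ∈ N, ∀ b ∈ N, a ⊔ b ∈ N)
    {z z' : M × M} (h : Relation.EqvGen (step N) z z') :
    z.1 ⊔ z.2 = z'.1 ⊔ z'.2 ∧
    ∀ m : M, (∃ n ∈ N, n ≤ z.1 ⊔ z.2 ∧ m ≤ z.2 ⊔ n) ↔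
      (∃ n ∈ N, n ≤ z'.1 ⊔ z'.2 ∧ m ≤ z'.2 ⊔ n) := by
  induction h with
  | rel x y hxy =>
      obtain ⟨w, n₀, hn₀, hx, hy⟩ := hxy
      subst hx; subst hy
      have hjoin : (w ⊔ (n₀, ⊥)).1 ⊔ (w ⊔ (n₀, ⊥)).2 = (w ⊔ (⊥, n₀)).1 ⊔ (w ⊔ (⊥, n₀)).2 := by
        simp only [Prod.fst_sup, Prod.snd_sup]
        simp [sup_assoc, sup_comm, sup_left_comm]
      refine ⟨hjoin, fun m => ?_⟩
      simp only [Prod.fst_sup, Prod.snd_sup] at hjoin ⊢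
      constructor
      · rintro ⟨n, hn, hns, hm⟩
        refine ⟨n₀ ⊔ n, hsupN _ hn₀ _ hn, ?_, ?_⟩
        · rw [← hjoin]
          exact sup_le (le_sup_of_le_left le_sup_right) hns
        · calc m ≤ w.2 ⊔ ⊥ ⊔ n := hm
            _ ≤ w.2 ⊔ n₀ ⊔ (n₀ ⊔ n) := by
              simp only [sup_bot_eq]
              exact sup_le (le_sup_of_le_left le_sup_left)
                (le_sup_of_le_right le_sup_right)
      · rintro ⟨n, hn, hns, hm⟩
        refine ⟨n₀ ⊔ n, hsupN _ hn₀ _ hn, ?_, ?_⟩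
        · rw [hjoin]
          exact sup_le (le_sup_of_le_right le_sup_right) hns
        · calc m ≤ w.2 ⊔ n₀ ⊔ n := hm
            _ ≤ w.2 ⊔ ⊥ ⊔ (n₀ ⊔ n) := by
              simp only [sup_bot_eq]
              exact sup_le (sup_le le_sup_left (le_sup_of_le_right le_sup_left))
                (le_sup_of_le_right le_sup_right)
  | refl x => exact ⟨rfl, fun m => Iff.rfl⟩
  | symm x y _ ih => exact ⟨ih.1.symm, fun m => (ih.2 m).symm⟩
  | trans x y z _ _ ih1 ih2 => exact ⟨ih1.1.trans ih2.1, fun m => (ih1.2 m).trans (ih2.2 m)⟩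

/-- if `(x,⊥)` is congruent to `(⊥,y)` then `x = y ∈ N`. -/
lemma mem_of_eqv {N : Set M} (hbotN : ⊥ ∈ N) (hsupN : ∀ a ∈ N, ∀ b ∈ N, a ⊔ b ∈ N)
    {x y : M} (h : Relation.EqvGen (step N) (x, ⊥) (⊥, y)) : x = y ∧ x ∈ N := by
  obtain ⟨h1, h2⟩ := invariant hsupN h
  simp only [sup_bot_eq, bot_sup_eq] at h1
  subst h1
  have hy : ∃ n ∈ N, n ≤ (⊥ : M) ⊔ x ∧ x ≤ x ⊔ n := ⟨⊥, hbotN, by simp, le_sup_left⟩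
  obtain ⟨n, hn, hns, hxn⟩ := (h2 x).mpr hy
  simp only [sup_bot_eq, bot_sup_eq] at hns hxn
  have : x = n := le_antisymm hxn hns
  exact ⟨rfl, this ▸ hn⟩

end Stmt10Aux

theorem stmt10 {M Q : Type u} [SemilatticeSup M] [OrderBot M]
    [SemilatticeSup Q] [OrderBot Q]
    (N : Set M) (hbotN : ⊥ ∈ N) (hsupN : ∀ a ∈ N, ∀ b ∈ N, a ⊔ b ∈ N)
    (π : SupBotHom (M × M) Q) (hsurj : Function.Surjective π)
    (hπ : ∀ z z' : M × M, π z = π z' ↔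
      ∀ (X : Type u) [SemilatticeSup X] [OrderBot X] (f g : SupBotHom M X),
        (∀ n ∈ N, f n = g n) → f z.1 ⊔ g z.2 = f z'.1 ⊔ g z'.2) :
    (Function.Injective fun x : M => π (x, ⊥)) ∧
    (Function.Injective fun y : M => π (⊥, y)) ∧
    ((Set.range fun x : M => π (x, ⊥)) ∩ (Set.range fun y : M => π (⊥, y)) =
      (fun x : M => π (x, ⊥)) '' N) ∧
    ((fun x : M => π (x, ⊥)) '' N = (fun y : M => π (⊥, y)) '' N) ∧
    (∀ (X : Type u) [SemilatticeSup X] [OrderBot X],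
      (∀ f g : SupBotHom M X, (∀ n ∈ N, f n = g n) →
        ∃! ρ : SupBotHom Q X, ∀ x y : M, ρ (π (x, y)) = f x ⊔ g y) ∧
      (∀ ρ : SupBotHom Q X,
        (∀ n ∈ N, ρ (π (n, ⊥)) = ρ (π (⊥, n))) ∧
        (∀ x y : M, ρ (π (x, y)) = ρ (π (x, ⊥)) ⊔ ρ (π (⊥, y))))) := by
  classical
  have hNswap : ∀ n ∈ N, π (n, ⊥) = π (⊥, n) := by
    intro n hn
    refine (hπ (n, ⊥) (⊥, n)).mpr ?_
    intro X _ _ f g hfg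
    simpa using hfg n hn
  have hinj1 : Function.Injective fun x : M => π (x, ⊥) := by
    intro x x' h
    have := (hπ (x, ⊥) (x', ⊥)).mp h M (SupBotHom.id M) (SupBotHom.id M) (fun n _ => rfl)
    simpa using this
  have hinj2 : Function.Injective fun y : M => π (⊥, y) := by
    intro y y' h
    have := (hπ (⊥, y) (⊥, y')).mp h M (SupBotHom.id M) (SupBotHom.id M) (fun n _ => rfl)
    simpa using this
  have hmem : ∀ x y : M, π (x, ⊥) = π (⊥, y) → x = y ∧ x ∈ N := by
    intro x y h
    have h2 := (hπ (x, ⊥) (⊥, y)).mp h (Stmt10Aux.Q0 N) (Stmt10Aux.F N) (Stmt10Aux.G N)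
      (fun n hn => Stmt10Aux.F_eq_G N hn)
    simp only [map_bot, sup_bot_eq, bot_sup_eq] at h2
    have h3 : Quotient.mk (Stmt10Aux.theta N) (x, ⊥) = Quotient.mk (Stmt10Aux.theta N) (⊥, y) := h2
    exact Stmt10Aux.mem_of_eqv hbotN hsupN (Quotient.exact h3)
  have hrange : (Set.range fun x : M => π (x, ⊥)) ∩ (Set.range fun y : M => π (⊥, y)) =
      (fun x : M => π (x, ⊥)) '' N := by
    apply Set.Subset.antisymm
    · rintro q ⟨⟨x, rfl⟩, ⟨y, hy⟩⟩
      obtain ⟨hxy, hxN⟩ := hmem x y hy.symm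
      exact ⟨x, hxN, rfl⟩
    · rintro q ⟨n, hn, rfl⟩
      exact ⟨⟨n, rfl⟩, ⟨n, (hNswap n hn).symm⟩⟩
  have himg : ((fun x : M => π (x, ⊥)) '' N = (fun y : M => π (⊥, y)) '' N) := by
    apply Set.ext; intro q
    constructor
    · rintro ⟨n, hn, rfl⟩; exact ⟨n, hn, (hNswap n hn).symm⟩
    · rintro ⟨n, hn, rfl⟩; exact ⟨n, hn, hNswap n hn⟩
  refine ⟨hinj1, hinj2, hrange, himg, ?_⟩
  intro X _ _
  constructor
  · intro f g hfg
    set σ := Function.surjInv hsurj with hσ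
    have key : ∀ z : M × M, f (σ (π z)).1 ⊔ g (σ (π z)).2 = f z.1 ⊔ g z.2 := fun z =>
      (hπ (σ (π z)) z).mp (Function.surjInv_eq hsurj (π z)) X f g hfg
    set ρ0 : Q → X := fun q => f (σ q).1 ⊔ g (σ q).2 with hρ0def
    have hρ0 : ∀ z : M × M, ρ0 (π z) = f z.1 ⊔ g z.2 := key
    have hsup : ∀ q q' : Q, ρ0 (q ⊔ q') = ρ0 q ⊔ ρ0 q' := by
      intro q q'
      obtain ⟨z, rfl⟩ := hsurj q
      obtain ⟨z', rfl⟩ := hsurj q'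
      rw [← map_sup, hρ0, hρ0, hρ0]
      simp only [Prod.fst_sup, Prod.snd_sup, map_sup]
      exact sup_sup_sup_comm _ _ _ _
    have hbot : ρ0 ⊥ = ⊥ := by
      have hb : (⊥ : Q) = π ((⊥ : M), (⊥ : M)) := (map_bot π).symm
      rw [hb, hρ0 ((⊥ : M), (⊥ : M))]
      simp
    refine ⟨⟨⟨ρ0, fun a b => hsup a b⟩, hbot⟩, fun x y => hρ0 (x, y), ?_⟩
    rintro ρ' hρ'
    apply SupBotHom.ext
    intro q
    obtain ⟨⟨z1, z2⟩, rfl⟩ := hsurj q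
    exact (hρ' z1 z2).trans (hρ0 (z1, z2)).symm
  · intro ρ
    refine ⟨fun n hn => by rw [hNswap n hn], fun x y => ?_⟩
    rw [show ((x, y) : M × M) = (x, ⊥) ⊔ (⊥, y) by simp [Prod.ext_iff], map_sup π, map_sup ρ]
end

section
/- Let (F, σ) be an object of Bmod^s and E ⊆ F a sub-join-semilattice containing ⊥, stable under σ, and containing all null elements of F (F^σ ⊆ E). Then for ξ ∈ F the following are equivalent: (1) ξ lies in the normal image of E, i.e., for every object (X, ρ) of Bmod^s and every Bmod^s-morphism g : F → X with g(E) ⊆ X^ρ one has g(ξ) ∈ X^ρ; (2) there exist n ≥ 0 and elements a₀, a₀', a₁, a₁', …, a_{n-1}, a_{n-1}', a_n of E such that ξ = a₀ ⊔ ξ, for each j < n one has p(a_j) = p(a_j') and a_j' ⊔ ξ = a_{j+1} ⊔ ξ, and p(a_n) = ξ ⊔ σ(ξ), where p(x) := x ⊔ σ(x). -/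
universe u

section NormalImage

variable {F : Type u} [SemilatticeSup F] [OrderBot F]

/-- One elementary "saturation" step: join `σ b` for some `b ∈ E` below `x`. -/
def myStep (σ : SupBotHom F F) (E : Set F) (x y : F) : Prop :=
  ∃ b, b ∈ E ∧ b ≤ x ∧ y = x ⊔ σ b

/-- Saturation reachability. -/
def myReach (σ : SupBotHom F F) (E : Set F) : F → F → Prop :=
  Relation.ReflTransGen (myStep σ E)

theorem hom_mono {σ : SupBotHom F F} {b x : F} (h : b ≤ x) : σ b ≤ σ x := by
  have : σ b ⊔ σ x = σ x := by rw [← map_sup, sup_eq_right.mpr h]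
  exact sup_eq_right.mp this

theorem myReach_le {σ : SupBotHom F F} {E : Set F} {x y : F}
    (h : myReach σ E x y) : x ≤ y := by
  induction h with
  | refl => exact le_rfl
  | tail _ hstep ih =>
    obtain ⟨b, _, _, rfl⟩ := hstep
    exact le_trans ih le_sup_left

theorem myReach_mono {σ : SupBotHom F F} {E : Set F} {u v w : F}
    (h : myReach σ E u v) (huw : u ≤ w) : myReach σ E w (w ⊔ v) := by
  induction h with
  | refl =>
    rw [sup_eq_left.mpr huw]
    exact Relation.ReflTransGen.refl
  | tail _ hstep ih =>
    obtain ⟨b, hb, hbv, rfl⟩ := hstep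
    refine ih.tail ⟨b, hb, le_trans hbv le_sup_right, ?_⟩
    rw [sup_assoc]

theorem myReach_trans {σ : SupBotHom F F} {E : Set F} {x y z : F}
    (h : myReach σ E x y) (h' : myReach σ E y z) : myReach σ E x z :=
  Relation.ReflTransGen.trans h h'

theorem myReach_sup {σ : SupBotHom F F} {E : Set F} {x y z w : F}
    (h : myReach σ E x z) (h' : myReach σ E y w) :
    myReach σ E (x ⊔ y) (z ⊔ w) := by
  have h1 : myReach σ E (x ⊔ y) (x ⊔ y ⊔ z) := myReach_mono h le_sup_left
  have h2 : myReach σ E (x ⊔ y ⊔ z) (x ⊔ y ⊔ z ⊔ w) := myReach_mono h' <|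
    le_trans le_sup_right le_sup_left
  have heq : x ⊔ y ⊔ z ⊔ w = z ⊔ w := by
    apply le_antisymm
    · exact sup_le (sup_le (sup_le (le_trans (myReach_le h) le_sup_left)
        (le_trans (myReach_le h') le_sup_right)) le_sup_left) le_sup_right
    · exact sup_le (le_trans le_sup_right le_sup_left) le_sup_right
  rw [heq] at h2
  exact myReach_trans h1 h2

theorem myReach_sigma {σ : SupBotHom F F} (hσ : ∀ x : F, σ (σ x) = x)
    {E : Set F} (hstab : ∀ a ∈ E, σ a ∈ E) {x y : F}
    (h : myReach σ E x y) : myReach σ E (σ x) (σ y) := by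
  induction h with
  | refl => exact Relation.ReflTransGen.refl
  | @tail m c hr hstep ih =>
    obtain ⟨b, hb, hbv, rfl⟩ := hstep
    refine ih.tail ⟨σ b, hstab b hb, hom_mono hbv, ?_⟩
    rw [map_sup, hσ]

/-- The setoid: joinability under saturation. -/
def mySetoid (σ : SupBotHom F F) (E : Set F) : Setoid F where
  r x y := ∃ z, myReach σ E x z ∧ myReach σ E y z
  iseqv := by
    constructor
    · exact fun x => ⟨x, Relation.ReflTransGen.refl, Relation.ReflTransGen.refl⟩
    · rintro x y ⟨z, h1, h2⟩; exact ⟨z, h2, h1⟩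
    · rintro x y w ⟨z, h1, h2⟩ ⟨z', h3, h4⟩
      have hz : myReach σ E z (z ⊔ z') := myReach_mono h3 (myReach_le h2)
      have hz' : myReach σ E z' (z ⊔ z') := by
        have := myReach_mono h2 (myReach_le h3)
        rwa [sup_comm] at this
      exact ⟨z ⊔ z', myReach_trans h1 hz, myReach_trans h4 hz'⟩

/-- Extraction of the normal-form chain from saturation reachability to a
null element. -/
theorem chain_of_reach (σ : SupBotHom F F) (hσ : ∀ x : F, σ (σ x) = x)
    (E : Set F) (hsup : ∀ a ∈ E, ∀ b ∈ E, a ⊔ b ∈ E)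
    (hstab : ∀ a ∈ E, σ a ∈ E) (hnull : ∀ x : F, σ x = x → x ∈ E)
    {t : F} (ht : σ t = t) :
    ∀ {x : F}, myReach σ E x t →
    (∃ (n : ℕ) (a a' : ℕ → F),
      (∀ j ≤ n, a j ∈ E) ∧ (∀ j < n, a' j ∈ E) ∧
      x = a 0 ⊔ x ∧
      (∀ j < n, a j ⊔ σ (a j) = a' j ⊔ σ (a' j) ∧ a' j ⊔ x = a (j + 1) ⊔ x) ∧
      a n ⊔ σ (a n) = x ⊔ σ x) := by
  intro x h
  induction h using Relation.ReflTransGen.head_induction_on with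
  | refl =>
    refine ⟨0, fun _ => t, fun _ => t, fun _ _ => hnull t ht, ?_, ?_, ?_, rfl⟩
    · intro j hj; omega
    · rw [sup_idem]
    · intro j hj; omega
  | @head u c hstep hrest ih =>
    obtain ⟨b, hb, hbu, hc⟩ := hstep
    subst hc
    obtain ⟨n, a, a', ha, ha', h0, hmid, hfin⟩ := ih
    have hpbE : b ⊔ σ b ∈ E := hsup b hb (σ b) (hstab b hb)
    have hσpb : σ (b ⊔ σ b) = b ⊔ σ b := by rw [map_sup, hσ, sup_comm]
    have psup : ∀ x y : F, (x ⊔ y) ⊔ σ (x ⊔ y) = (x ⊔ σ x) ⊔ (y ⊔ σ y) := by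
      intro x y; rw [map_sup]; ac_rfl
    have ppb : (b ⊔ σ b) ⊔ σ (b ⊔ σ b) = b ⊔ σ b := by rw [hσpb, sup_idem]
    have hv : (b ⊔ σ b) ⊔ u = u ⊔ σ b := by
      apply le_antisymm
      · exact sup_le (sup_le (hbu.trans le_sup_left) le_sup_right) le_sup_left
      · exact sup_le le_sup_right (le_sup_right.trans le_sup_left)
    refine ⟨n + 1, fun j => Nat.casesOn j b (fun k => a k ⊔ (b ⊔ σ b)),
      fun j => Nat.casesOn j (b ⊔ σ b) (fun k => a' k ⊔ (b ⊔ σ b)),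
      ?_, ?_, ?_, ?_, ?_⟩
    · rintro (_ | k) hk
      · exact hb
      · exact hsup _ (ha k (by omega)) _ hpbE
    · rintro (_ | k) hk
      · exact hpbE
      · exact hsup _ (ha' k (by omega)) _ hpbE
    · exact (sup_eq_right.mpr hbu).symm
    · rintro (_ | k) hk
      · constructor
        · show b ⊔ σ b = (b ⊔ σ b) ⊔ σ (b ⊔ σ b)
          rw [ppb]
        · show (b ⊔ σ b) ⊔ u = (a 0 ⊔ (b ⊔ σ b)) ⊔ u
          calc (b ⊔ σ b) ⊔ u = u ⊔ σ b := hv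
            _ = a 0 ⊔ (u ⊔ σ b) := h0
            _ = a 0 ⊔ ((b ⊔ σ b) ⊔ u) := by rw [hv]
            _ = (a 0 ⊔ (b ⊔ σ b)) ⊔ u := by ac_rfl
      · have hk' : k < n := by omega
        obtain ⟨hp, hs⟩ := hmid k hk'
        constructor
        · show (a k ⊔ (b ⊔ σ b)) ⊔ σ (a k ⊔ (b ⊔ σ b))
            = (a' k ⊔ (b ⊔ σ b)) ⊔ σ (a' k ⊔ (b ⊔ σ b))
          rw [psup, ppb, psup, ppb, hp]
        · show (a' k ⊔ (b ⊔ σ b)) ⊔ u = (a (k + 1) ⊔ (b ⊔ σ b)) ⊔ u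
          calc (a' k ⊔ (b ⊔ σ b)) ⊔ u = a' k ⊔ ((b ⊔ σ b) ⊔ u) := sup_assoc _ _ _
            _ = a' k ⊔ (u ⊔ σ b) := by rw [hv]
            _ = a (k + 1) ⊔ (u ⊔ σ b) := hs
            _ = a (k + 1) ⊔ ((b ⊔ σ b) ⊔ u) := by rw [hv]
            _ = (a (k + 1) ⊔ (b ⊔ σ b)) ⊔ u := (sup_assoc _ _ _).symm
    · show (a n ⊔ (b ⊔ σ b)) ⊔ σ (a n ⊔ (b ⊔ σ b)) = u ⊔ σ u
      rw [psup, ppb, hfin, psup]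
      -- goal : ((u ⊔ σ u) ⊔ (σ b ⊔ σ (σ b))) ⊔ (b ⊔ σ b) = u ⊔ σ u
      rw [hσ]
      apply le_antisymm
      · refine sup_le (sup_le le_rfl (sup_le ?_ ?_)) (sup_le ?_ ?_)
        · exact (hom_mono hbu).trans le_sup_right
        · exact hbu.trans le_sup_left
        · exact hbu.trans le_sup_left
        · exact (hom_mono hbu).trans le_sup_right
      · exact le_sup_left.trans le_sup_left

end NormalImage

theorem stmt11 {F : Type u} [SemilatticeSup F] [OrderBot F]
    (σ : SupBotHom F F) (hσ : ∀ x : F, σ (σ x) = x)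
    (E : Set F) (hbot : ⊥ ∈ E) (hsup : ∀ a ∈ E, ∀ b ∈ E, a ⊔ b ∈ E)
    (hstab : ∀ a ∈ E, σ a ∈ E) (hnull : ∀ x : F, σ x = x → x ∈ E)
    (ξ : F) :
    (∀ (X : Type u) [SemilatticeSup X] [OrderBot X] (ρ : SupBotHom X X),
      (∀ x : X, ρ (ρ x) = x) →
      ∀ g : SupBotHom F X, (∀ x : F, g (σ x) = ρ (g x)) →
        (∀ a ∈ E, ρ (g a) = g a) → ρ (g ξ) = g ξ) ↔
    (∃ (n : ℕ) (a a' : ℕ → F),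
      (∀ j ≤ n, a j ∈ E) ∧ (∀ j < n, a' j ∈ E) ∧
      ξ = a 0 ⊔ ξ ∧
      (∀ j < n, a j ⊔ σ (a j) = a' j ⊔ σ (a' j) ∧ a' j ⊔ ξ = a (j + 1) ⊔ ξ) ∧
      a n ⊔ σ (a n) = ξ ⊔ σ ξ) := by
  constructor
  · -- universal property implies the chain condition
    intro h1
    set s : Setoid F := mySetoid σ E with hs
    -- supremum on the quotient
    have supcompat : (Relator.LiftFun (mySetoid σ E).r (Relator.LiftFun (mySetoid σ E).r (mySetoid σ E).r))
        (· ⊔ ·) (· ⊔ ·) := by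
      rintro x x' ⟨z, hx, hx'⟩ y y' ⟨w, hy, hy'⟩
      exact ⟨z ⊔ w, myReach_sup hx hy, myReach_sup hx' hy'⟩
    letI : Max (Quotient s) := ⟨Quotient.map₂' (· ⊔ ·) supcompat⟩
    have supmk : ∀ x y : F,
        (Quotient.mk'' x : Quotient s) ⊔ Quotient.mk'' y
          = Quotient.mk'' (x ⊔ y) := fun _ _ => rfl
    letI : SemilatticeSup (Quotient s) := SemilatticeSup.mk'
      (fun q r => Quotient.inductionOn₂ q r fun x y => by
        rw [supmk, supmk, sup_comm])
      (fun q r t => Quotient.inductionOn₃ q r t fun x y z => by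
        rw [supmk, supmk, supmk, supmk, sup_assoc])
      (fun q => Quotient.inductionOn q fun x => by rw [supmk, sup_idem])
    letI : Bot (Quotient s) := ⟨Quotient.mk'' ⊥⟩
    letI : @OrderBot (Quotient s) (@SemilatticeSup.toPartialOrder (Quotient s) _).toLE := by
      refine @OrderBot.mk (Quotient s) (@SemilatticeSup.toPartialOrder (Quotient s) _).toLE _
        (fun q => Quotient.inductionOn q fun x => ?_)
      have : (⊥ : Quotient s) ⊔ Quotient.mk'' x = Quotient.mk'' x := by
        show (Quotient.mk'' (⊥:F) : Quotient s) ⊔ Quotient.mk'' x = _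
        rw [supmk, bot_sup_eq]
      exact sup_eq_right.mp this
    have sigmacompat : (Relator.LiftFun (mySetoid σ E).r (mySetoid σ E).r) σ σ := by
      rintro x y ⟨z, hx, hy⟩
      exact ⟨σ z, myReach_sigma hσ hstab hx, myReach_sigma hσ hstab hy⟩
    set ρ : SupBotHom (Quotient s) (Quotient s) :=
      ⟨⟨Quotient.map' σ sigmacompat,
        fun q r => Quotient.inductionOn₂ q r fun x y => by
          rw [supmk]
          show Quotient.mk'' (σ (x ⊔ y)) = Quotient.mk'' (σ x) ⊔ Quotient.mk'' (σ y)
          rw [supmk, map_sup]⟩,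
        by show Quotient.mk'' (σ (⊥:F)) = Quotient.mk'' (⊥:F); rw [map_bot]⟩
      with hρ
    set g : SupBotHom F (Quotient s) :=
      ⟨⟨Quotient.mk'', fun x y => (supmk x y).symm⟩, rfl⟩ with hg
    have hρinv : ∀ q : Quotient s, ρ (ρ q) = q := fun q =>
      Quotient.inductionOn q fun x => by
        show Quotient.mk'' (σ (σ x)) = Quotient.mk'' x
        rw [hσ]
    have hcompat : ∀ x : F, g (σ x) = ρ (g x) := fun x => rfl
    have hEnull : ∀ a ∈ E, ρ (g a) = g a := by
      intro a ha
      show Quotient.mk'' (σ a) = Quotient.mk'' a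
      refine Quotient.sound' ⟨a ⊔ σ a, ?_, ?_⟩
      · refine Relation.ReflTransGen.single ⟨σ a, hstab a ha, le_rfl, ?_⟩
        rw [hσ, sup_comm]
      · exact Relation.ReflTransGen.single ⟨a, ha, le_rfl, rfl⟩
    have key : ρ (g ξ) = g ξ := h1 (Quotient s) ρ hρinv g hcompat hEnull
    have hrel : (mySetoid σ E).r (σ ξ) ξ := Quotient.exact' key
    obtain ⟨z, h1', h2'⟩ := hrel
    -- build a sigma-fixed target
    have hz1 : myReach σ E ξ (σ z) := by
      have := myReach_sigma hσ hstab h1'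
      rwa [hσ] at this
    have hz2 : myReach σ E z (z ⊔ σ z) := myReach_mono hz1 (myReach_le h2')
    have hreach : myReach σ E ξ (z ⊔ σ z) := myReach_trans h2' hz2
    have hfix : σ (z ⊔ σ z) = z ⊔ σ z := by rw [map_sup, hσ, sup_comm]
    exact chain_of_reach σ hσ E hsup hstab hnull hfix hreach
  · -- the chain condition implies the universal property
    rintro ⟨n, a, a', ha, ha', h0, hmid, hfin⟩
    intro X _ _ ρ hρ g hcomp hE
    have hgE : ∀ j < n, g (a j) = g (a' j) := by
      intro j hj
      have := congrArg g (hmid j hj).1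
      rw [map_sup, map_sup, hcomp, hcomp, hE _ (ha j (le_of_lt hj)),
        hE _ (ha' j hj), sup_idem, sup_idem] at this
      exact this
    have hind : ∀ j ≤ n, g (a j) ⊔ g ξ = g ξ := by
      intro j
      induction j with
      | zero =>
        intro _
        rw [← map_sup]
        conv_rhs => rw [h0]
      | succ k ih =>
        intro hk
        have hkn : k < n := by omega
        have hs := (hmid k hkn).2
        have := congrArg g hs
        rw [map_sup, map_sup] at this
        rw [← this, ← hgE k hkn, ih (by omega)]
    have hn := congrArg g hfin
    rw [map_sup, map_sup, hcomp, hcomp, hE _ (ha n le_rfl), sup_idem] at hn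
    -- hn : g (a n) = g ξ ⊔ ρ (g ξ)
    have hle : g ξ ⊔ ρ (g ξ) ⊔ g ξ = g ξ := by
      rw [← hn]; exact hind n le_rfl
    have hkey : g ξ ⊔ ρ (g ξ) = g ξ := by
      rw [sup_comm (g ξ) (ρ (g ξ)), sup_assoc, sup_idem, sup_comm] at hle
      exact hle
    have h2 := congrArg ρ hkey
    rw [map_sup, hρ] at h2
    calc ρ (g ξ) = ρ (g ξ) ⊔ g ξ := h2.symm
      _ = g ξ ⊔ ρ (g ξ) := sup_comm _ _
      _ = g ξ := hkey
end

section
/- Let (F, σ) be an object of Bmod^s and E ⊆ F a sub-join-semilattice containing ⊥, stable under σ, with F^σ ⊆ E. For b, b' ∈ F define b ∼_cok b' iff g(b) = g(b') for every object (X, ρ) of Bmod^s and every Bmod^s-morphism g : F → X with g(E) ⊆ X^ρ (this is the congruence defining the cokernel of the inclusion E ⊆ F). Then ∼_cok equals the smallest equivalence relation on F containing all pairs (u, u ⊔ σ(u)) for u ∈ E, together with all pairs (ξ ⊔ u, ξ ⊔ v) for ξ ∈ F and u, v ∈ E with u ⊔ σ(u) = v ⊔ σ(v). In particular, the cokernel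 of the inclusion is the quotient of F^σ ∪ (F ∖ E) by this equivalence relation, with cokernel map given by the projection p(x) = x ⊔ σ(x) on E and by the quotient map on F ∖ E. -/
universe u

/-!
Explicit description of the cokernel of an inclusion in `Bmod^s`
(Proposition `compute cokernel`).  For a subobject `E` of `(F, σ)` containing
the null elements, the cokernel congruence
`b ∼ b' ↔ g b = g b'` for all `Bmod^s`-morphisms `g` null on `E`
equals the smallest equivalence relation containing all pairs
`(u, u ⊔ σ u)` for `u ∈ E` and all pairs `(ξ ⊔ u, ξ ⊔ v)` for `ξ ∈ F` and
`u, v ∈ E` with `u ⊔ σ u = v ⊔ σ v`.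
-/

namespace Stmt12Aux

variable {F : Type u} [SemilatticeSup F] [OrderBot F]
  (σ : SupBotHom F F) (E : Set F)

/-- The generating relation. -/
def gen (s t : F) : Prop :=
  (∃ u ∈ E, s = u ∧ t = u ⊔ σ u) ∨
  (∃ ξ : F, ∃ u ∈ E, ∃ v ∈ E, u ⊔ σ u = v ⊔ σ v ∧ s = ξ ⊔ u ∧ t = ξ ⊔ v)

/-- The generated equivalence relation. -/
def R (s t : F) : Prop := Relation.EqvGen (gen σ E) s t

theorem gen_sup_right (hσ : ∀ x : F, σ (σ x) = x)
    (hsup : ∀ a ∈ E, ∀ b ∈ E, a ⊔ b ∈ E) (hstab : ∀ a ∈ E, σ a ∈ E)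
    {s t : F} (c : F) (h : gen σ E s t) :
    gen σ E (s ⊔ c) (t ⊔ c) := by
  rcases h with ⟨u, hu, hs, ht⟩ | ⟨ξ, u, hu, v, hv, he, hs, ht⟩
  · subst hs; subst ht
    refine Or.inr ⟨c, s, hu, s ⊔ σ s, hsup s hu (σ s) (hstab s hu), ?_, ?_, ?_⟩
    · rw [map_sup, hσ, sup_assoc, sup_comm (σ s) s, ← sup_assoc, sup_idem]
    · rw [sup_comm]
    · rw [sup_comm]
  · subst hs; subst ht
    exact Or.inr ⟨ξ ⊔ c, u, hu, v, hv, he, by rw [sup_right_comm], by rw [sup_right_comm]⟩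

theorem gen_sigma (hσ : ∀ x : F, σ (σ x) = x) (hstab : ∀ a ∈ E, σ a ∈ E)
    {s t : F} (h : gen σ E s t) : gen σ E (σ s) (σ t) := by
  rcases h with ⟨u, hu, hs, ht⟩ | ⟨ξ, u, hu, v, hv, he, hs, ht⟩
  · subst hs; subst ht
    exact Or.inl ⟨σ s, hstab s hu, rfl, by rw [map_sup]⟩
  · subst hs; subst ht
    refine Or.inr ⟨σ ξ, σ u, hstab u hu, σ v, hstab v hv, ?_, by rw [map_sup], by rw [map_sup]⟩
    rw [hσ, hσ, sup_comm (σ u) u, sup_comm (σ v) v]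
    exact he

theorem R_sup_right (hσ : ∀ x : F, σ (σ x) = x)
    (hsup : ∀ a ∈ E, ∀ b ∈ E, a ⊔ b ∈ E) (hstab : ∀ a ∈ E, σ a ∈ E)
    {s t : F} (c : F) (h : R σ E s t) : R σ E (s ⊔ c) (t ⊔ c) := by
  induction h with
  | rel x y hxy =>
    exact Relation.EqvGen.rel _ _ (gen_sup_right σ E hσ hsup hstab c hxy)
  | refl x => exact Relation.EqvGen.refl _
  | symm x y _ ih => exact Relation.EqvGen.symm _ _ ih
  | trans x y z _ _ ih₁ ih₂ => exact Relation.EqvGen.trans _ _ _ ih₁ ih₂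

theorem R_sup (hσ : ∀ x : F, σ (σ x) = x)
    (hsup : ∀ a ∈ E, ∀ b ∈ E, a ⊔ b ∈ E) (hstab : ∀ a ∈ E, σ a ∈ E)
    {s t s' t' : F} (h : R σ E s t) (h' : R σ E s' t') :
    R σ E (s ⊔ s') (t ⊔ t') := by
  refine Relation.EqvGen.trans _ _ _ (R_sup_right σ E hσ hsup hstab s' h) ?_
  rw [sup_comm t s', sup_comm t t']
  exact R_sup_right σ E hσ hsup hstab t h'

theorem R_sigma (hσ : ∀ x : F, σ (σ x) = x) (hstab : ∀ a ∈ E, σ a ∈ E)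
    {s t : F} (h : R σ E s t) : R σ E (σ s) (σ t) := by
  induction h with
  | rel x y hxy => exact Relation.EqvGen.rel _ _ (gen_sigma σ E hσ hstab hxy)
  | refl x => exact Relation.EqvGen.refl _
  | symm x y _ ih => exact Relation.EqvGen.symm _ _ ih
  | trans x y z _ _ ih₁ ih₂ => exact Relation.EqvGen.trans _ _ _ ih₁ ih₂

theorem R_sigma_self (hσ : ∀ x : F, σ (σ x) = x) (hstab : ∀ a ∈ E, σ a ∈ E)
    {a : F} (ha : a ∈ E) : R σ E (σ a) a := by
  have h1 : R σ E a (a ⊔ σ a) :=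
    Relation.EqvGen.rel (r := gen σ E) _ _ (Or.inl ⟨a, ha, rfl, rfl⟩)
  have h2 : R σ E (σ a) (a ⊔ σ a) := by
    have h3 : gen σ E (σ a) (σ a ⊔ σ (σ a)) := Or.inl ⟨σ a, hstab a ha, rfl, rfl⟩
    have := Relation.EqvGen.rel (r := gen σ E) _ _ h3
    rwa [hσ, sup_comm (σ a) a] at this
  exact Relation.EqvGen.trans _ _ _ h2 (Relation.EqvGen.symm _ _ h1)

/-- The setoid. -/
def sd : Setoid F := ⟨R σ E, Relation.EqvGen.is_equivalence _⟩

end Stmt12Aux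

theorem stmt12 {F : Type u} [SemilatticeSup F] [OrderBot F]
    (σ : SupBotHom F F) (hσ : ∀ x : F, σ (σ x) = x)
    (E : Set F) (hbot : ⊥ ∈ E) (hsup : ∀ a ∈ E, ∀ b ∈ E, a ⊔ b ∈ E)
    (hstab : ∀ a ∈ E, σ a ∈ E) (hnull : ∀ x : F, σ x = x → x ∈ E)
    (b b' : F) :
    (∀ (X : Type u) [SemilatticeSup X] [OrderBot X] (ρ : SupBotHom X X),
      (∀ x : X, ρ (ρ x) = x) →
      ∀ g : SupBotHom F X, (∀ x : F, g (σ x) = ρ (g x)) →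
        (∀ a ∈ E, ρ (g a) = g a) → g b = g b') ↔
    Relation.EqvGen
      (fun s t : F =>
        (∃ u ∈ E, s = u ∧ t = u ⊔ σ u) ∨
        (∃ ξ : F, ∃ u ∈ E, ∃ v ∈ E,
          u ⊔ σ u = v ⊔ σ v ∧ s = ξ ⊔ u ∧ t = ξ ⊔ v))
      b b' := by
  open Stmt12Aux in
  constructor
  · -- forward: build the quotient object
    intro H
    letI S : Setoid F := sd σ E
    let Q := Quotient S
    let qsup : Q → Q → Q := Quotient.map₂ (· ⊔ ·)
      (fun _ _ h _ _ h' => R_sup σ E hσ hsup hstab h h')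
    letI : Max Q := ⟨qsup⟩
    have hsup_mk : ∀ a c : F, (⟦a⟧ : Q) ⊔ ⟦c⟧ = ⟦a ⊔ c⟧ := fun a c => rfl
    letI instQ : SemilatticeSup Q := SemilatticeSup.mk'
      (fun x y => Quotient.inductionOn₂ x y fun a c => by
        rw [hsup_mk, hsup_mk, sup_comm])
      (fun x y z => Quotient.inductionOn₃ x y z fun a c d => by
        rw [hsup_mk, hsup_mk, hsup_mk, hsup_mk, sup_assoc])
      (fun x => Quotient.inductionOn x fun a => by rw [hsup_mk, sup_idem])
    letI instB : @OrderBot Q instQ.toLE :=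
      @OrderBot.mk Q instQ.toLE ⟨(⟦⊥⟧ : Q)⟩
        (fun x => Quotient.inductionOn x fun a =>
          show (⟦⊥⟧ : Q) ⊔ ⟦a⟧ = ⟦a⟧ by rw [hsup_mk, bot_sup_eq])
    let qσ : SupBotHom Q Q :=
      { toFun := Quotient.map σ (fun _ _ h => R_sigma σ E hσ hstab h)
        map_sup' := fun x y => Quotient.inductionOn₂ x y fun a c => by
          show (⟦σ (a ⊔ c)⟧ : Q) = ⟦σ a⟧ ⊔ ⟦σ c⟧
          rw [hsup_mk, map_sup]
        map_bot' := by
          show (⟦σ ⊥⟧ : Q) = ⟦⊥⟧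
          rw [map_bot] }
    let g : SupBotHom F Q :=
      { toFun := fun a => ⟦a⟧
        map_sup' := fun a c => (hsup_mk a c).symm
        map_bot' := rfl }
    have := H Q qσ
      (fun x => Quotient.inductionOn x fun a => by
        show (⟦σ (σ a)⟧ : Q) = ⟦a⟧
        rw [hσ])
      g (fun x => rfl)
      (fun a ha => Quotient.sound (R_sigma_self σ E hσ hstab ha))
    exact Quotient.exact this
  · -- backward
    intro h X _ _ ρ hρ g hg hE
    induction h with
    | rel s t hst =>
      rcases hst with ⟨u, hu, hs, ht⟩ | ⟨ξ, u, hu, v, hv, he, hs, ht⟩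
      · subst hs; subst ht
        rw [map_sup, hg, hE s hu, sup_idem]
      · subst hs; subst ht
        have key : ∀ w ∈ E, g (w ⊔ σ w) = g w := fun w hw => by
          rw [map_sup, hg, hE w hw, sup_idem]
        have huv : g u = g v := by
          rw [← key u hu, ← key v hv, he]
        rw [map_sup, map_sup, huv]
    | refl x => rfl
    | symm x y _ ih => exact ih.symm
    | trans x y z _ _ ih₁ ih₂ => exact ih₁.trans ih₂
end

section
/- Let f : (L, σ) → (M, τ) be a morphism in Bmod^s and suppose ξ ∈ M lies in the normal image of f, i.e., for every object (X, ρ) of Bmod^s and every Bmod^s-morphism g : M → X with g(f(L)) ⊆ X^ρ one has g(ξ) ∈ X^ρ. Then there exists l ∈ L such that ξ ⊔ τ(ξ) = f(l) ⊔ τ(ξ). -/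
universe u

/-!
Proposition `tentative1 (iii)`: if `ξ` lies in the normal image of a
`Bmod^s`-morphism `f : (L, σ) → (M, τ)` — i.e. `g ξ` is null for every
`Bmod^s`-morphism `g` out of `M` null on the range of `f` — then
`ξ ⊔ τ ξ ∈ f(L) ⊔ τ ξ`, i.e. `ξ ⊔ τ ξ = f l ⊔ τ ξ` for some `l ∈ L`.
-/

theorem stmt13 {L M : Type u} [SemilatticeSup L] [OrderBot L]
    [SemilatticeSup M] [OrderBot M]
    (σ : SupBotHom L L) (hσ : ∀ x : L, σ (σ x) = x)
    (τ : SupBotHom M M) (hτ : ∀ x : M, τ (τ x) = x)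
    (f : SupBotHom L M) (hf : ∀ x : L, f (σ x) = τ (f x))
    (ξ : M)
    (hξ : ∀ (X : Type u) [SemilatticeSup X] [OrderBot X] (ρ : SupBotHom X X),
      (∀ x : X, ρ (ρ x) = x) →
      ∀ g : SupBotHom M X, (∀ m : M, g (τ m) = ρ (g m)) →
        (∀ l : L, ρ (g (f l)) = g (f l)) → ρ (g ξ) = g ξ) :
    ∃ l : L, ξ ⊔ τ ξ = f l ⊔ τ ξ := by
  classical
  -- the ideal
  set In : M → Prop := fun m => ∃ l, σ l = l ∧ f l ≤ ξ ⊔ τ ξ ∧ m ≤ f l ⊔ τ ξ with hIn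
  have In_mono : ∀ {a b : M}, a ≤ b → In b → In a := by
    rintro a b hab ⟨l, h1, h2, h3⟩
    exact ⟨l, h1, h2, hab.trans h3⟩
  have In_sup : ∀ a b : M, In (a ⊔ b) ↔ In a ∧ In b := by
    intro a b
    constructor
    · intro h
      exact ⟨In_mono le_sup_left h, In_mono le_sup_right h⟩
    · rintro ⟨⟨l, h1, h2, h3⟩, ⟨l', h1', h2', h3'⟩⟩
      refine ⟨l ⊔ l', ?_, ?_, ?_⟩
      · rw [map_sup, h1, h1']
      · rw [map_sup]; exact sup_le h2 h2'
      · rw [map_sup]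
        exact sup_le (h3.trans (sup_le (le_sup_of_le_left le_sup_left) le_sup_right))
          (h3'.trans (sup_le (le_sup_of_le_left le_sup_right) le_sup_right))
  have In_bot : In ⊥ := ⟨⊥, by simp, by simp, by simp⟩
  -- symmetry on the image
  have In_im : ∀ l0 : L, In (f l0) → In (f (σ l0)) := by
    rintro l0 ⟨l, h1, h2, h3⟩
    have hfl0 : f l0 ≤ ξ ⊔ τ ξ := h3.trans (sup_le h2 le_sup_right)
    have hfsl0 : f (σ l0) ≤ ξ ⊔ τ ξ := by
      have := OrderHomClass.mono τ hfl0
      rw [← hf, map_sup, hτ] at this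
      exact this.trans (sup_le le_sup_right le_sup_left)
    refine ⟨l ⊔ l0 ⊔ σ l0, ?_, ?_, ?_⟩
    · rw [map_sup, map_sup, h1, hσ, sup_assoc, sup_comm (σ l0) l0, ← sup_assoc]
    · rw [map_sup, map_sup]
      exact sup_le (sup_le h2 hfl0) hfsl0
    · calc f (σ l0) ≤ f (l ⊔ l0 ⊔ σ l0) := OrderHomClass.mono f (le_sup_right)
        _ ≤ _ := le_sup_left
  have In_im' : ∀ l0 : L, In (τ (f l0)) ↔ In (f l0) := by
    intro l0
    rw [← hf]
    constructor
    · intro h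
      have := In_im (σ l0) h
      rwa [hσ] at this
    · exact In_im l0
  -- the test object
  let ρ : SupBotHom (ULift.{u} Prop × ULift.{u} Prop) (ULift.{u} Prop × ULift.{u} Prop) :=
    { toFun := Prod.swap, map_sup' := fun a b => rfl, map_bot' := rfl }
  let g : SupBotHom M (ULift.{u} Prop × ULift.{u} Prop) :=
    { toFun := fun m => (⟨¬ In m⟩, ⟨¬ In (τ m)⟩)
      map_sup' := by
        intro a b
        have h1 : (¬ In (a ⊔ b)) = ((¬ In a) ∨ (¬ In b)) := by
          rw [eq_iff_iff, In_sup, not_and_or]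
        have h2 : (¬ In (τ (a ⊔ b))) = ((¬ In (τ a)) ∨ (¬ In (τ b))) := by
          rw [eq_iff_iff, map_sup, In_sup, not_and_or]
        exact Prod.ext (congrArg ULift.up h1) (congrArg ULift.up h2)
      map_bot' := by
        have h1 : (¬ In (⊥ : M)) = False := by simp [In_bot]
        have h2 : (¬ In (τ (⊥ : M))) = False := by simp [map_bot, In_bot]
        exact Prod.ext (congrArg ULift.up h1) (congrArg ULift.up h2) }
  have hρρ : ∀ x, ρ (ρ x) = x := fun x => rfl
  have hgτ : ∀ m : M, g (τ m) = ρ (g m) := by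
    intro m
    refine Prod.ext rfl ?_
    show ULift.up (¬ In (τ (τ m))) = ULift.up (¬ In m)
    rw [hτ]
  have hnull : ∀ l : L, ρ (g (f l)) = g (f l) := by
    intro l
    have h : (¬ In (τ (f l))) = (¬ In (f l)) := by
      rw [In_im' l]
    refine Prod.ext ?_ ?_
    · exact congrArg ULift.up h
    · exact congrArg ULift.up h.symm
  have key := hξ (ULift.{u} Prop × ULift.{u} Prop) ρ hρρ g hgτ hnull
  have key1 : (¬ In (τ ξ)) = (¬ In ξ) :=
    congrArg ULift.down (congrArg Prod.fst key)
  have hτξ : In (τ ξ) := ⟨⊥, by simp, by simp, by simp⟩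
  have hInξ : In ξ := by
    by_contra h
    rw [← key1] at h
    exact h hτξ
  obtain ⟨l, h1, h2, h3⟩ := hInξ
  exact ⟨l, le_antisymm (sup_le h3 le_sup_right) (sup_le h2 le_sup_right)⟩
end

section
/- Let (E, σ) be an object of Bmod^s and F ⊆ E a sub-join-semilattice containing ⊥ and stable under σ. Then for ξ ∈ E the following are equivalent: (1) for every object (X, ρ) of Bmod^s and every Bmod^s-morphism g : E → X with g(F) ⊆ X^ρ one has g(ξ) ∈ X^ρ (ξ lies in the least normal subobject of E containing F); (2) for every Bmod^s-morphism L : E → sB with L(F) contained in the diagonal of Bool × Bool, L(ξ) lies in the diagonal. That is, the least normal subobject of E containing F equals the biorthogonal (F^⊥)^⊥ with respect to the pairing of E with E* := Hom_{Bmod^s}(E, sB). -/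
universe u

/-!
Biorthogonality in `Bmod^s` (Proposition `bidualcoker (i)` / Lemma
`normal_condition`): for a subobject `F` of `(E, σ)`, an element `ξ ∈ E` lies
in the least normal subobject containing `F` (i.e. in every kernel containing
`F`) if and only if `ξ ∈ (F^⊥)^⊥`, where orthogonality is taken with respect
to the pairing of `E` with `E* = Hom_{Bmod^s}(E, 𝔰𝔹)` and
`𝔰𝔹 = (Bool × Bool, swap)` whose null elements form the diagonal.
-/

theorem stmt14 {E : Type u} [SemilatticeSup E] [OrderBot E]
    (σ : SupBotHom E E) (hσ : ∀ x : E, σ (σ x) = x)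
    (F : Set E) (hbot : ⊥ ∈ F) (hsup : ∀ a ∈ F, ∀ b ∈ F, a ⊔ b ∈ F)
    (hstab : ∀ a ∈ F, σ a ∈ F) (ξ : E) :
    (∀ (X : Type u) [SemilatticeSup X] [OrderBot X] (ρ : SupBotHom X X),
      (∀ x : X, ρ (ρ x) = x) →
      ∀ g : SupBotHom E X, (∀ x : E, g (σ x) = ρ (g x)) →
        (∀ a ∈ F, ρ (g a) = g a) → ρ (g ξ) = g ξ) ↔
    (∀ L : SupBotHom E (Bool × Bool),
      (∀ x : E, L (σ x) = ((L x).2, (L x).1)) →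
      (∀ a ∈ F, (L a).1 = (L a).2) → (L ξ).1 = (L ξ).2) := by
  classical
  constructor
  · -- (1) → (2): instantiate with `X = ULift (Bool × Bool)`, `ρ = swap`.
    intro h L hLσ hLF
    set X := ULift.{u} (Bool × Bool) with hX
    let ρ : SupBotHom X X :=
      { toFun := fun x => ⟨(x.down.2, x.down.1)⟩
        map_sup' := fun a b => rfl
        map_bot' := rfl }
    let g : SupBotHom E X :=
      { toFun := fun e => ⟨L e⟩
        map_sup' := fun a b => by simp only [map_sup]; rfl
        map_bot' := by simp only [map_bot]; rfl }
    have key := h X ρ (fun x => rfl)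
      g (fun x => by
        show (⟨L (σ x)⟩ : X) = ⟨((L x).2, (L x).1)⟩
        rw [hLσ x])
      (fun a ha => by
        have h' := hLF a ha
        exact congrArg ULift.up (Prod.ext h'.symm h'))
    have h2 : ((L ξ).2, (L ξ).1) = L ξ := congrArg ULift.down key
    exact (congrArg Prod.fst h2).symm
  · -- (2) → (1): separate using characters into `Bool × Bool`.
    intro h X _ _ ρ hρ g hgσ hgF
    by_contra hne
    set y := g ξ with hy
    obtain ⟨p, hp⟩ : ∃ p : X, ¬ ((y ≤ p) ↔ (ρ y ≤ p)) := by
      by_cases hc : ρ y ≤ y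
      · have hc2 : ¬ y ≤ ρ y := fun hle => hne (le_antisymm hc hle)
        exact ⟨ρ y, fun hiff => hc2 (hiff.mpr le_rfl)⟩
      · exact ⟨y, fun hiff => hc (hiff.mp le_rfl)⟩
    have key2 : ∀ u v : X, (!decide (u ⊔ v ≤ p)) = ((!decide (u ≤ p)) || (!decide (v ≤ p))) := by
      intro u v
      by_cases hu : u ≤ p <;> by_cases hv : v ≤ p <;>
        simp [sup_le_iff, hu, hv]
    let L : SupBotHom E (Bool × Bool) :=
      { toFun := fun e => (!decide (g e ≤ p), !decide (ρ (g e) ≤ p))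
        map_sup' := fun a b => by
          have e1 : g (a ⊔ b) = g a ⊔ g b := map_sup g a b
          have e2 : ρ (g (a ⊔ b)) = ρ (g a) ⊔ ρ (g b) := by rw [e1, map_sup]
          show ((!decide (g (a ⊔ b) ≤ p)), (!decide (ρ (g (a ⊔ b)) ≤ p))) = _
          rw [e1, map_sup ρ]
          exact Prod.ext (key2 _ _) (key2 _ _)
        map_bot' := by
          have e1 : g (⊥ : E) = ⊥ := map_bot g
          have e2 : ρ (g (⊥ : E)) = ⊥ := by rw [e1, map_bot]
          show ((!decide (g (⊥ : E) ≤ p)), (!decide (ρ (g (⊥ : E)) ≤ p))) = ⊥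
          rw [e1, map_bot ρ]
          rw [decide_eq_true (bot_le : (⊥ : X) ≤ p)]
          rfl }
    have key := h L
      (fun x => by
        show (!decide (g (σ x) ≤ p), !decide (ρ (g (σ x)) ≤ p)) = _
        rw [hgσ x, hρ (g x)]
        rfl)
      (fun a ha => by
        show (!decide (g a ≤ p)) = (!decide (ρ (g a) ≤ p))
        rw [hgF a ha])
    have key' : (!decide (y ≤ p)) = (!decide (ρ y ≤ p)) := key
    exact hp (decide_eq_decide.mp (Bool.not_inj key'))
end

section
/- Let φ : (L, σ) → (M, τ) be a morphism in Bmod^s, and say ξ ∈ M lies in the normal image of φ if g(ξ) is null for every Bmod^s-morphism g out of (M, τ) that is null on the range φ(L). Then: (i) if ξ ∈ M satisfies ξ ≠ τ(ξ) and is indecomposable (i.e., {⊥, ξ} is a downward-closed subset of M), then ξ ∈ φ(L) if and only if ξ lies in the normal image of φ; (ii) if every element of M is a finite join of indecomposable elements, then the normal image of φ equals M if and only if every element of M is of the form φ(l) ⊔ m with l ∈ L and m ∈ M^τ; (iii) if ξ ∈ M is minimal among non-null elements (ξ is the only non-null element of the interval [⊥, ξ]), then ξ ∈ φ(L) if and only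 if ξ lies in the normal image of φ. -/
universe u

/-- `ξ` lies in the normal image of the `Bmod^s`-morphism `φ : (L, σ) → (M, τ)`:
every `Bmod^s`-morphism `g` out of `(M, τ)` which is null on the range of `φ`
is null at `ξ`. -/
def InNormalImage {L M : Type u} [SemilatticeSup L] [OrderBot L]
    [SemilatticeSup M] [OrderBot M]
    (τ : SupBotHom M M) (φ : SupBotHom L M) (ξ : M) : Prop :=
  ∀ (X : Type u) [SemilatticeSup X] [OrderBot X] (ρ : SupBotHom X X),
    (∀ x : X, ρ (ρ x) = x) →
    ∀ g : SupBotHom M X, (∀ m : M, g (τ m) = ρ (g m)) →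
      (∀ l : L, ρ (g (φ l)) = g (φ l)) → ρ (g ξ) = g ξ

/-!
Proposition `extreme and range`:
(i) an indecomposable non-null element lies in the range of `φ` iff it lies in
the normal image of `φ`; (ii) if `M` is generated (under finite joins) by its
indecomposable elements, then the normal image of `φ` is all of `M` iff
`φ(L) ⊔ M^τ = M`; (iii) an element minimal among non-null elements lies in the
range of `φ` iff it lies in the normal image.
-/

section Helpers

variable {L M : Type u} [SemilatticeSup L] [OrderBot L]
    [SemilatticeSup M] [OrderBot M]

lemma inNormalImage_of_mem_range (τ : SupBotHom M M) (φ : SupBotHom L M)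
    {ξ : M} (hx : ξ ∈ Set.range φ) : InNormalImage τ φ ξ := by
  obtain ⟨l, rfl⟩ := hx
  intro X _ _ ρ hρ g hg hnull
  exact hnull l

lemma not_inNormalImage (σ : SupBotHom L L) (hσ : ∀ x : L, σ (σ x) = x)
    (τ : SupBotHom M M) (hτ : ∀ x : M, τ (τ x) = x)
    (φ : SupBotHom L M) (hφ : ∀ x : L, φ (σ x) = τ (φ x))
    (ξ : M) (hne : ¬ τ ξ ≤ ξ) (hirr : ∀ l : L, φ l ≤ ξ → τ (φ l) ≤ ξ) :
    ¬ InNormalImage τ φ ξ := by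
  intro h
  have hiff : ∀ l : L, φ l ≤ ξ ↔ τ (φ l) ≤ ξ := by
    intro l
    refine ⟨hirr l, fun hl => ?_⟩
    have h1 : φ (σ l) ≤ ξ := by rw [hφ l]; exact hl
    have h2 := hirr (σ l) h1
    rwa [hφ, hτ] at h2
  set X := ULift.{u} Prop × ULift.{u} Prop with hX
  let ρ : SupBotHom X X := ⟨⟨Prod.swap, fun a b => rfl⟩, rfl⟩
  have hρ : ∀ x : X, ρ (ρ x) = x := fun x => rfl
  have hsup : ∀ a b : M, (¬ a ⊔ b ≤ ξ) = ((¬ a ≤ ξ) ∨ (¬ b ≤ ξ)) := by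
    intro a b
    exact eq_iff_iff.mpr (by rw [sup_le_iff, not_and_or])
  have hbot : (¬ (⊥ : M) ≤ ξ) = False := eq_iff_iff.mpr (by simp)
  let g : SupBotHom M X :=
    ⟨⟨fun m => (ULift.up (¬ m ≤ ξ), ULift.up (¬ τ m ≤ ξ)), fun a b => by
        refine Prod.ext ?_ ?_
        · exact congrArg ULift.up (hsup a b)
        · show ULift.up (¬ τ (a ⊔ b) ≤ ξ) = _
          rw [map_sup]
          exact congrArg ULift.up (hsup (τ a) (τ b))⟩, by
      refine Prod.ext ?_ ?_
      · exact congrArg ULift.up hbot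
      · show ULift.up (¬ τ (⊥:M) ≤ ξ) = _
        rw [map_bot]
        exact congrArg ULift.up hbot⟩
  have hg : ∀ m : M, g (τ m) = ρ (g m) := by
    intro m
    refine Prod.ext rfl ?_
    show ULift.up (¬ τ (τ m) ≤ ξ) = ULift.up (¬ m ≤ ξ)
    rw [hτ]
  have hnull : ∀ l : L, ρ (g (φ l)) = g (φ l) := by
    intro l
    refine Prod.ext ?_ ?_
    · exact congrArg ULift.up (eq_iff_iff.mpr (not_iff_not.mpr (hiff l).symm))
    · exact congrArg ULift.up (eq_iff_iff.mpr (not_iff_not.mpr (hiff l)))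
  have key := h X ρ hρ g hg hnull
  have key1 : (¬ τ ξ ≤ ξ) = (¬ ξ ≤ ξ) := congrArg (fun x : X => x.1.down) key
  rw [eq_iff_iff] at key1
  exact (key1.mp hne) le_rfl

lemma mem_range_of_indec (σ : SupBotHom L L) (hσ : ∀ x : L, σ (σ x) = x)
    (τ : SupBotHom M M) (hτ : ∀ x : M, τ (τ x) = x)
    (φ : SupBotHom L M) (hφ : ∀ x : L, φ (σ x) = τ (φ x))
    (ξ : M) (hnn : ξ ≠ τ ξ) (hind : ∀ y : M, y ≤ ξ → y = ⊥ ∨ y = ξ)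
    (h : InNormalImage τ φ ξ) : ξ ∈ Set.range φ := by
  by_contra hr
  have hner : ∀ l, φ l ≠ ξ := fun l hl => hr ⟨l, hl⟩
  have hxbot : ξ ≠ ⊥ := by
    intro hb
    apply hnn
    rw [hb, map_bot]
  have hne : ¬ τ ξ ≤ ξ := by
    intro hle
    rcases hind _ hle with h1 | h1
    · have : ξ = ⊥ := by
        have := congrArg τ h1
        rwa [hτ, map_bot] at this
      exact hxbot this
    · exact hnn h1.symm
  have hirr : ∀ l : L, φ l ≤ ξ → τ (φ l) ≤ ξ := by
    intro l hl
    rcases hind _ hl with h1 | h1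
    · rw [h1, map_bot]; exact bot_le
    · exact absurd h1 (hner l)
  exact not_inNormalImage σ hσ τ hτ φ hφ ξ hne hirr h

lemma mem_range_of_min (σ : SupBotHom L L) (hσ : ∀ x : L, σ (σ x) = x)
    (τ : SupBotHom M M) (hτ : ∀ x : M, τ (τ x) = x)
    (φ : SupBotHom L M) (hφ : ∀ x : L, φ (σ x) = τ (φ x))
    (ξ : M) (hnn : τ ξ ≠ ξ) (hmin : ∀ y : M, y ≤ ξ → τ y ≠ y → y = ξ)
    (h : InNormalImage τ φ ξ) : ξ ∈ Set.range φ := by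
  by_contra hr
  have hner : ∀ l, φ l ≠ ξ := fun l hl => hr ⟨l, hl⟩
  have hne : ¬ τ ξ ≤ ξ := by
    intro hle
    have h1 : τ (τ ξ) ≠ τ ξ := by rw [hτ]; exact fun hc => hnn hc.symm
    exact hnn (hmin _ hle h1)
  have hirr : ∀ l : L, φ l ≤ ξ → τ (φ l) ≤ ξ := by
    intro l hl
    by_cases hc : τ (φ l) = φ l
    · rw [hc]; exact hl
    · exact absurd (hmin _ hl hc) (hner l)
  exact not_inNormalImage σ hσ τ hτ φ hφ ξ hne hirr h

end Helpers

theorem stmt15 {L M : Type u} [SemilatticeSup L] [OrderBot L]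
    [SemilatticeSup M] [OrderBot M]
    (σ : SupBotHom L L) (hσ : ∀ x : L, σ (σ x) = x)
    (τ : SupBotHom M M) (hτ : ∀ x : M, τ (τ x) = x)
    (φ : SupBotHom L M) (hφ : ∀ x : L, φ (σ x) = τ (φ x)) :
    -- (i)
    (∀ ξ : M, ξ ≠ τ ξ → (∀ y : M, y ≤ ξ → y = ⊥ ∨ y = ξ) →
      (ξ ∈ Set.range φ ↔ InNormalImage τ φ ξ)) ∧
    -- (ii)
    ((∀ m : M, ∃ s : Finset M,
        (∀ y ∈ s, ∀ z : M, z ≤ y → z = ⊥ ∨ z = y) ∧ m = s.sup id) →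
      ((∀ ξ : M, InNormalImage τ φ ξ) ↔
        ∀ m : M, ∃ (l : L) (m' : M), τ m' = m' ∧ m = φ l ⊔ m')) ∧
    -- (iii)
    (∀ ξ : M, τ ξ ≠ ξ → (∀ y : M, y ≤ ξ → τ y ≠ y → y = ξ) →
      (ξ ∈ Set.range φ ↔ InNormalImage τ φ ξ)) := by
  
  refine ⟨?_, ?_, ?_⟩
  · intro ξ hnn hind
    exact ⟨inNormalImage_of_mem_range τ φ,
      mem_range_of_indec σ hσ τ hτ φ hφ ξ hnn hind⟩
  · intro hgen
    constructor
    · intro hall m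
      obtain ⟨s, hs, rfl⟩ := hgen m
      clear hgen
      classical
      induction s using Finset.induction_on with
      | empty =>
        exact ⟨⊥, ⊥, map_bot τ, by simp⟩
      | @insert a s hnotmem ih =>
        obtain ⟨l, m', hm', hsum⟩ := ih (fun y hy => hs y (Finset.mem_insert_of_mem hy))
        have ha := hs a (Finset.mem_insert_self a s)
        rw [Finset.sup_insert]
        by_cases hca : τ a = a
        · refine ⟨l, m' ⊔ a, ?_, ?_⟩
          · rw [map_sup, hm', hca]
          · rw [id, hsum]
            ac_rfl
        · have hr : a ∈ Set.range φ := by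
            refine mem_range_of_indec σ hσ τ hτ φ hφ a (fun hc => hca hc.symm) ha (hall a)
          obtain ⟨la, hla⟩ := hr
          refine ⟨l ⊔ la, m', hm', ?_⟩
          rw [map_sup, hla, id, hsum]
          ac_rfl
    · intro hdec ξ
      obtain ⟨l, m', hm', rfl⟩ := hdec ξ
      intro X _ _ ρ hρ g hg hnull
      have h1 : ρ (g m') = g m' := by
        conv_lhs => rw [← hm', hg, hρ]
      rw [map_sup, map_sup, hnull l, h1]
  · intro ξ hnn hmin
    exact ⟨inNormalImage_of_mem_range τ φ,
      mem_range_of_min σ hσ τ hτ φ hφ ξ hnn hmin⟩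
end

section
/- Let (E, σ) be a finite object of Bmod^s such that every element of the dual E* := SupBotHom(E, Bool), ordered pointwise, is a (finite) join of minimal nonzero elements of E*. Then for every object (N, τ) of Bmod^s and every Bmod^s-morphism f : (E, σ) → (N, τ), the following are equivalent: (1) the kernel of f is null, i.e., f⁻¹(N^τ) = E^σ; (2) f is σ-injective, i.e., for all x, y ∈ E with x ⊔ σ(x) = y ⊔ σ(y), f(x) = f(y) implies x = y. -/
universe u

/-!
Theorem `kernel and injective`: let `(E, σ)` be a finite object of `Bmod^s`
whose dual `E* = SupBotHom E Bool` (with pointwise order) is generated by its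
minimal nonzero elements.  Then, for every `Bmod^s`-morphism
`f : (E, σ) → (N, τ)`, the kernel of `f` is null (`f⁻¹(N^τ) = E^σ`)
if and only if `f` is `σ`-injective (injective on every fiber of
`p x = x ⊔ σ x`).
-/

theorem stmt16 {E : Type u} [SemilatticeSup E] [OrderBot E] [Finite E]
    (σ : SupBotHom E E) (hσ : ∀ x : E, σ (σ x) = x)
    (hgen : ∀ φ : SupBotHom E Bool, ∃ s : Finset (SupBotHom E Bool),
      (∀ ψ ∈ s, ψ ≠ ⊥ ∧
        ∀ χ : SupBotHom E Bool, χ ≤ ψ → χ = ⊥ ∨ χ = ψ) ∧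
      φ = s.sup id)
    {N : Type u} [SemilatticeSup N] [OrderBot N]
    (τ : SupBotHom N N) (hτ : ∀ x : N, τ (τ x) = x)
    (f : SupBotHom E N) (hf : ∀ x : E, f (σ x) = τ (f x)) :
    {x : E | τ (f x) = f x} = {x : E | σ x = x} ↔
    (∀ x y : E, x ⊔ σ x = y ⊔ σ y → f x = f y → x = y) := by
  classical
  obtain ⟨_⟩ := nonempty_fintype E
  have bsup : ∀ p q : Bool, p ⊔ q = (p || q) := by decide
  have σmono : Monotone σ := fun a b hab => by
    have h : σ a ⊔ σ b = σ b := by rw [← map_sup, sup_eq_right.2 hab]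
    exact le_of_sup_eq h
  have fmono : Monotone f := fun a b hab => by
    have h : f a ⊔ f b = f b := by rw [← map_sup, sup_eq_right.2 hab]
    exact le_of_sup_eq h
  -- pointwise order on the dual
  have hle : ∀ g h : SupBotHom E Bool, g ≤ h ↔ ∀ t, g t ≤ h t := by
    intro g h
    constructor
    · intro hgh t
      have h1 : g ⊔ h = h := sup_eq_right.2 hgh
      have h2 : g t ⊔ h t = h t := by rw [← SupBotHom.sup_apply, h1]
      exact le_of_sup_eq h2
    · intro hp
      have h1 : g ⊔ h = h := by
        apply DFunLike.ext
        intro t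
        rw [SupBotHom.sup_apply]
        exact sup_eq_right.2 (hp t)
      exact le_of_sup_eq (by rw [h1])
  have eval_sup : ∀ (s : Finset (SupBotHom E Bool)) (z : E),
      (s.sup id) z = s.sup (fun ψ => ψ z) := by
    intro s z
    induction s using Finset.cons_induction with
    | empty => simp [SupBotHom.bot_apply]
    | cons a s ha ih => simp [Finset.sup_cons, SupBotHom.sup_apply, ih]
  constructor
  · -- kernel null ⇒ σ-injective
    intro hker
    have hker' : ∀ z : E, τ (f z) = f z → σ z = z := by
      intro z hz
      have hmem : z ∈ {x : E | τ (f x) = f x} := hz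
      rw [hker] at hmem
      exact hmem
    -- top element
    set T : E := Finset.univ.sup id with hT
    have leT : ∀ z : E, z ≤ T := fun z => Finset.le_sup (f := id) (Finset.mem_univ z)
    have σT : σ T = T := by
      have h1 : σ T ≤ T := leT _
      have h2 : T ≤ σ T := by
        have h3 := σmono h1
        rwa [hσ] at h3
      exact le_antisymm h1 h2
    -- Main claim for comparable pairs
    have key : ∀ x y : E, x ≤ y → x ⊔ σ x = y ⊔ σ y → f x = f y → x = y := by
      intro x y hxy hp hfe
      by_contra hne
      have hyx : ¬ y ≤ x := fun h => hne (le_antisymm hxy h)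
      -- the dual element φ_x
      let φ : SupBotHom E Bool :=
        { toFun := fun t => decide (¬ t ≤ x)
          map_sup' := by
            intro s t
            have hiff : (s ⊔ t ≤ x) ↔ (s ≤ x ∧ t ≤ x) := sup_le_iff
            rcases Classical.em (s ≤ x) with hs | hs <;>
              rcases Classical.em (t ≤ x) with ht | ht <;>
              simp [hiff, hs, ht, bsup]
          map_bot' := by simp }
      obtain ⟨s, hmin, hφs⟩ := hgen φ
      have hφy : φ y = true := by simp [φ, hyx]
      -- find ψ ∈ s with ψ y = true
      have hexψ : ∃ ψ ∈ s, ψ y = true := by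
        by_contra hc
        push_neg at hc
        have h1 : φ y = s.sup (fun ψ => ψ y) := by rw [hφs, eval_sup]
        have h2 : s.sup (fun ψ => ψ y) ≤ ⊥ := by
          apply Finset.sup_le
          intro b hb
          have := hc b hb
          simp only [Bool.not_eq_true] at this
          exact le_of_eq this
        rw [hφy] at h1
        rw [← h1] at h2
        exact absurd h2 (by decide)
      obtain ⟨ψ, hψs, hψy⟩ := hexψ
      have hψle : ψ ≤ φ := hφs ▸ Finset.le_sup (f := id) hψs
      have hψx : ψ x = false := by
        have h1 : ψ x ≤ φ x := (hle ψ φ).1 hψle x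
        have h2 : φ x = false := by simp [φ]
        rw [h2] at h1
        exact le_bot_iff.1 h1
      obtain ⟨-, hψmin⟩ := hmin ψ hψs
      -- a := sup of the kernel of ψ
      set a : E := (Finset.univ.filter (fun t => ψ t = false)).sup id with ha
      have hψa : ψ a = false := by
        have h0 : ψ a = (Finset.univ.filter (fun t => ψ t = false)).sup (ψ ∘ id) :=
          map_finset_sup ψ _ _
        rw [h0]
        refine le_bot_iff.1 (Finset.sup_le ?_)
        intro b hb
        simp only [Finset.mem_filter] at hb
        exact le_of_eq hb.2
      have hiff : ∀ t : E, ψ t = false ↔ t ≤ a := by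
        intro t
        constructor
        · intro ht
          exact Finset.le_sup (f := id) (Finset.mem_filter.2 ⟨Finset.mem_univ t, ht⟩)
        · intro ht
          have h1 : ψ t ⊔ ψ a = ψ a := by rw [← map_sup, sup_eq_right.2 ht]
          have h2 : ψ t ≤ ψ a := le_of_sup_eq h1
          rw [hψa] at h2
          exact le_bot_iff.1 h2
      have hxa : x ≤ a := (hiff x).1 hψx
      have hya : ¬ y ≤ a := by
        intro h
        rw [← hiff y] at h
        rw [h] at hψy
        exact Bool.false_ne_true hψy
      -- a ⊔ y = T  (coatom property from minimality of ψ)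
      have hay : a ⊔ y = T := by
        let χ : SupBotHom E Bool :=
          { toFun := fun t => decide (¬ t ≤ a ⊔ y)
            map_sup' := by
              intro u v
              have hiff2 : (u ⊔ v ≤ a ⊔ y) ↔ (u ≤ a ⊔ y ∧ v ≤ a ⊔ y) := sup_le_iff
              rcases Classical.em (u ≤ a ⊔ y) with hs | hs <;>
                rcases Classical.em (v ≤ a ⊔ y) with ht | ht <;>
                simp [hiff2, hs, ht, bsup]
            map_bot' := by simp }
        have hχψ : χ ≤ ψ := by
          rw [hle]
          intro t
          by_cases h : ψ t = false
          · have h1 : t ≤ a := (hiff t).1 h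
            have h2 : t ≤ a ⊔ y := h1.trans le_sup_left
            have h3 : χ t = false := by simp [χ, h2]
            rw [h3, h]
          · simp only [Bool.not_eq_false] at h
            rw [h]
            exact le_top
        rcases hψmin χ hχψ with hbot | heq
        · have hall : ∀ t : E, t ≤ a ⊔ y := by
            intro t
            by_contra hc
            have h1 : χ t = true := by simp [χ, hc]
            rw [hbot] at h1
            rw [SupBotHom.bot_apply] at h1
            exact Bool.false_ne_true h1
          exact le_antisymm (sup_le (leT a) (leT y)) (hall T)
        · exfalso
          have h1 : χ y = false := by simp [χ]
          rw [heq] at h1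
          rw [h1] at hψy
          exact Bool.false_ne_true hψy
      -- case split on σ a = a
      by_cases hfix : σ a = a
      · -- then y ≤ x ⊔ σ x ≤ a, contradiction
        apply hya
        have h1 : y ≤ y ⊔ σ y := le_sup_left
        rw [← hp] at h1
        have h2 : x ⊔ σ x ≤ a := sup_le hxa (by rw [← hfix]; exact σmono hxa)
        exact h1.trans h2
      · -- a is in the kernel: contradiction
        apply hfix
        apply hker'
        have hfa : f a = f T := by
          have h1 : f a ⊔ f y = f T := by rw [← map_sup, hay]
          have h2 : f a ⊔ f y = f a := by
            rw [← hfe, ← map_sup, sup_eq_left.2 hxa]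
          rw [← h2, h1]
        have hfσa : f (σ a) = f T := by
          have hs : σ a ⊔ σ y = T := by rw [← map_sup, hay, σT]
          have h1 : f (σ a) ⊔ f (σ y) = f T := by rw [← map_sup, hs]
          have h2 : f (σ y) = f (σ x) := by rw [hf, hf, hfe]
          have h3 : f (σ a) ⊔ f (σ x) = f (σ a) := by
            rw [← map_sup, sup_eq_left.2 (σmono hxa)]
          rw [h2, h3] at h1
          exact h1
        rw [← hf a, hfσa, hfa]
    -- deduce the general case
    intro x y hp hfe
    have h1 : x = x ⊔ y := by
      apply key x (x ⊔ y) le_sup_left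
      · rw [map_sup, sup_sup_sup_comm, hp, sup_idem]
      · rw [map_sup, ← hfe, sup_idem]
    have h2 : y = x ⊔ y := by
      apply key y (x ⊔ y) le_sup_right
      · rw [map_sup, sup_sup_sup_comm, ← hp, sup_idem]
      · rw [map_sup, hfe, sup_idem]
    exact h1.trans h2.symm
  · -- σ-injective ⇒ kernel null
    intro hinj
    ext z
    simp only [Set.mem_setOf_eq]
    constructor
    · intro hz
      have h1 : f (σ z) = f z := by rw [hf, hz]
      have h2 : σ z ⊔ σ (σ z) = z ⊔ σ z := by rw [hσ, sup_comm]
      exact hinj (σ z) z h2 h1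
    · intro hz
      rw [← hf, hz]
end

section
/- Let M be a finite join-semilattice with least element ⊥ such that every element of the dual M* := SupBotHom(M, Bool), ordered pointwise, is a (finite) join of minimal nonzero elements of M*. Let sM denote the object (M × M, swap) of Bmod^s. Then for every object (X, ρ) of Bmod^s, a Bmod^s-morphism φ : sM → X is injective (equivalently, a monomorphism in Bmod^s) if and only if its kernel is null, i.e., φ⁻¹(X^ρ) equals the diagonal {(x, x) | x ∈ M}. -/
universe u

open Classical in
/-- The `𝔹`-module morphism `M → Bool` sending `x` to `true` iff `x ≰ a`. -/
private noncomputable def notLeHom {M : Type u} [SemilatticeSup M] [OrderBot M] (a : M) :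
    SupBotHom M Bool where
  toFun x := if x ≤ a then false else true
  map_sup' x y := by
    by_cases hx : x ≤ a <;> by_cases hy : y ≤ a <;> simp [hx, hy, sup_le_iff]
  map_bot' := by simp

private lemma notLeHom_eq_false {M : Type u} [SemilatticeSup M] [OrderBot M] {a x : M} :
    notLeHom a x = false ↔ x ≤ a := by
  by_cases h : x ≤ a <;> simp [notLeHom, h]

private lemma notLeHom_eq_true {M : Type u} [SemilatticeSup M] [OrderBot M] {a x : M} :
    notLeHom a x = true ↔ ¬ x ≤ a := by
  by_cases h : x ≤ a <;> simp [notLeHom, h]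

private lemma bool_le_false {p : Bool} (h : p ≤ false) : p = false := by
  cases p
  · rfl
  · exact absurd h (by decide)

private lemma sup_apply_false {M : Type u} [SemilatticeSup M] [OrderBot M]
    (s : Finset (SupBotHom M Bool)) (c : M)
    (h : ∀ ψ ∈ s, ψ c = false) : (s.sup id) c = false := by
  refine Finset.sup_induction (p := fun ψ : SupBotHom M Bool => ψ c = false) rfl ?_ h
  intro x hx y hy
  show x c ⊔ y c = false
  simp [hx, hy]

/-!
Theorem `null kernel thm` / Corollary `exactrad (ii)`: let `M` be a finite
`𝔹`-module whose dual `M* = SupBotHom M Bool` is generated by its minimal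
nonzero elements, and let `𝔰M = (M × M, swap)` be the associated object of
`Bmod^s`.  Then a `Bmod^s`-morphism `φ : 𝔰M → (X, ρ)` is injective
(equivalently, a monomorphism in `Bmod^s`) if and only if its kernel
`φ⁻¹(X^ρ)` is null, i.e. equals the diagonal of `M × M`.
-/

theorem stmt17 {M : Type u} [SemilatticeSup M] [OrderBot M] [Finite M]
    (hgen : ∀ φ : SupBotHom M Bool, ∃ s : Finset (SupBotHom M Bool),
      (∀ ψ ∈ s, ψ ≠ ⊥ ∧
        ∀ χ : SupBotHom M Bool, χ ≤ ψ → χ = ⊥ ∨ χ = ψ) ∧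
      φ = s.sup id)
    {X : Type u} [SemilatticeSup X] [OrderBot X]
    (ρ : SupBotHom X X) (hρ : ∀ x : X, ρ (ρ x) = x)
    (φ : SupBotHom (M × M) X)
    (hφ : ∀ p : M × M, φ (p.2, p.1) = ρ (φ p)) :
    Function.Injective φ ↔
      {p : M × M | φ p = ρ (φ p)} = {p : M × M | p.1 = p.2} := by
  constructor
  · -- injective ⇒ null kernel
    intro hinj
    ext ⟨x, y⟩
    simp only [Set.mem_setOf_eq]
    constructor
    · intro h
      have h2 : φ (y, x) = φ (x, y) := (hφ (x, y)).trans h.symm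
      have h3 := hinj h2
      exact ((Prod.mk.injEq _ _ _ _).mp h3).1.symm
    · intro h
      subst h
      exact hφ (x, x)
  · -- null kernel ⇒ injective
    intro hker
    classical
    cases nonempty_fintype M
    have hker' : ∀ u v : M, φ (u, v) = φ (v, u) → u = v := by
      intro u v h
      have hm : (u, v) ∈ {p : M × M | φ p = ρ (φ p)} := by
        show φ (u, v) = ρ (φ (u, v))
        rw [← hφ (u, v)]
        exact h
      rw [hker] at hm
      exact hm
    have hswap : ∀ u v : M, φ (v, u) = ρ (φ (u, v)) := fun u v => hφ (u, v)
    -- key consequence of null kernel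
    have K : ∀ u v s t : M, φ (u, v) = φ (s, t) → u ⊔ t = v ⊔ s := by
      intro u v s t h
      apply hker'
      have e1 : φ (u ⊔ t, v ⊔ s) = φ (u, v) ⊔ φ (t, s) := map_sup φ (u, v) (t, s)
      have e2 : φ (v ⊔ s, u ⊔ t) = φ (v, u) ⊔ φ (s, t) := map_sup φ (v, u) (s, t)
      rw [e1, e2, hswap u v, hswap s t, ← h]
      exact sup_comm _ _
    -- main lemma
    have L : ∀ a b c d : M, φ (a, b) = φ (c, d) → a ≤ c → b ≤ d → c ≤ a := by
      intro a b c d heq hac hbd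
      by_contra hca
      obtain ⟨s, hs, hsup⟩ := hgen (notLeHom a)
      have hc0 : (notLeHom a) c = true := notLeHom_eq_true.mpr hca
      have hex : ∃ ψ ∈ s, ψ c = true := by
        by_contra hall
        push_neg at hall
        have hfalse : (s.sup id) c = false := by
          refine sup_apply_false s c ?_
          intro ψ hψ
          cases h' : ψ c
          · rfl
          · exact absurd h' (hall ψ hψ)
        rw [← hsup, hc0] at hfalse
        exact absurd hfalse (by decide)
      obtain ⟨ψ, hψs, hψc⟩ := hex
      have hψle : ψ ≤ notLeHom a := hsup ▸ Finset.le_sup (f := id) hψs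
      have hψmin := (hs ψ hψs).2
      -- m : the largest element where ψ is false
      set m : M := (Finset.univ.filter (fun x => ψ x = false)).sup id with hm_def
      have hmfalse : ψ m = false := by
        refine Finset.sup_induction (p := fun x : M => ψ x = false) (by simp [map_bot]) ?_ ?_
        · intro x hx y hy
          have : ψ (x ⊔ y) = ψ x ⊔ ψ y := map_sup ψ x y
          rw [this, hx, hy]
          rfl
        · intro x hx
          exact (Finset.mem_filter.mp hx).2
      have hmle : ∀ x, ψ x = false → x ≤ m := by
        intro x hx
        exact Finset.le_sup (f := id) (Finset.mem_filter.mpr ⟨Finset.mem_univ x, hx⟩)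
      have hmono : ∀ x y : M, x ≤ y → ψ x ≤ ψ y := by
        intro x y hxy
        have h1 : ψ (x ⊔ y) = ψ x ⊔ ψ y := map_sup ψ x y
        rw [sup_eq_right.mpr hxy] at h1
        exact h1 ▸ le_sup_left
      have ham : a ≤ m := by
        apply hmle
        apply bool_le_false
        have h5 : ψ a ≤ notLeHom a a := hψle a
        rwa [show (notLeHom a) a = false from notLeHom_eq_false.mpr le_rfl] at h5
      have ham' : a ⊔ m = m := sup_eq_right.mpr ham
      have hcm : ¬ c ≤ m := by
        intro h
        have := hmono c m h
        rw [hmfalse, hψc] at this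
        exact absurd this (by decide)
      set t : M := c ⊔ m with ht_def
      -- minimality of ψ forces t = c ⊔ m to be the top element
      have ht : ∀ z : M, z ≤ t := by
        have hχle : notLeHom t ≤ ψ := by
          intro x
          show notLeHom t x ≤ ψ x
          cases hx : ψ x
          · have hxt : x ≤ t := le_trans (hmle x hx) le_sup_right
            rw [notLeHom_eq_false.mpr hxt]
          · exact Bool.le_true _
        rcases hψmin (notLeHom t) hχle with h0 | hEq
        · intro z
          by_contra hz
          have hzt : notLeHom t z = true := notLeHom_eq_true.mpr hz
          rw [h0] at hzt
          simpa using hzt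
        · exfalso
          have : ψ t = false := by
            rw [← hEq]
            exact notLeHom_eq_false.mpr le_rfl
          exact hcm (le_trans le_sup_left (hmle t this))
      -- step 1 : φ (m, b) = φ (t, d)
      have e1 : φ (m, b) = φ (t, d) := by
        have l1 : φ (m, b) = φ (a, b) ⊔ φ (m, ⊥) := by
          rw [← map_sup]
          congr 1
          simp [Prod.ext_iff, ham']
        have l2 : φ (t, d) = φ (c, d) ⊔ φ (m, ⊥) := by
          rw [← map_sup]
          congr 1
          simp [Prod.ext_iff, ht_def]
        rw [l1, l2, heq]
      -- step 2 : m ⊔ d = t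
      have e2 : m ⊔ d = t := by
        have := K m b t d e1
        rwa [sup_eq_right.mpr (ht b)] at this
      -- step 3 : φ (m, b ⊔ m) = φ (t, t)
      have e3 : φ (m, b ⊔ m) = φ (t, t) := by
        have l1 : φ (m, b ⊔ m) = φ (a, b) ⊔ φ (m, m) := by
          rw [← map_sup]
          congr 1
          simp [Prod.ext_iff, ham']
        have l2 : φ (t, t) = φ (c, d) ⊔ φ (m, m) := by
          rw [← map_sup]
          congr 1
          simp [Prod.ext_iff, ht_def, sup_comm d m, e2]
        rw [l1, l2, heq]
      have hfix : ρ (φ (t, t)) = φ (t, t) := (hφ (t, t)).symm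
      -- step 4 : b ≤ m
      have hbm : b ≤ m := by
        have h4 : φ (b ⊔ m, m) = φ (m, b ⊔ m) := by
          rw [hswap m (b ⊔ m), e3, hfix, ← e3]
        exact sup_eq_right.mp (hker' (b ⊔ m) m h4)
      rw [sup_eq_right.mpr hbm] at e3
      -- step 5 : φ (m, t) = φ (t, t)
      have e6 : φ (m, t) = φ (t, t) := by
        have l1 : φ (m, t) = φ (m, m) ⊔ φ (⊥, t) := by
          rw [← map_sup]
          congr 1
          simp [Prod.ext_iff, sup_eq_right.mpr (ht m)]
        have l2 : φ (t, t) = φ (t, t) ⊔ φ (⊥, t) := by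
          rw [← map_sup]
          congr 1
          simp [Prod.ext_iff]
        rw [l1, e3, ← l2]
      -- step 6 : t = m, contradiction
      have h7 : φ (t, m) = φ (m, t) := by
        rw [hswap m t, e6, hfix, ← e6]
      have hmt : t = m := hker' t m h7
      exact hcm (hmt ▸ ht c)
    -- conclude injectivity
    intro p q hpq
    obtain ⟨p1, p2⟩ := p
    obtain ⟨q1, q2⟩ := q
    have key : ∀ a b c d : M, φ (a, b) = φ (c, d) → c ≤ a ∧ d ≤ b := by
      intro a b c d heq'
      have h1 : φ (a, b) = φ (a ⊔ c, b ⊔ d) := by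
        have : φ (a ⊔ c, b ⊔ d) = φ (a, b) ⊔ φ (c, d) := map_sup φ (a, b) (c, d)
        rw [this, ← heq', sup_idem]
      have h2 : φ (b, a) = φ (b ⊔ d, a ⊔ c) := by
        rw [hswap a b, hswap (a ⊔ c) (b ⊔ d), h1]
      have c1 := L a b (a ⊔ c) (b ⊔ d) h1 le_sup_left le_sup_left
      have c2 := L b a (b ⊔ d) (a ⊔ c) h2 le_sup_left le_sup_left
      exact ⟨le_trans le_sup_right c1, le_trans le_sup_right c2⟩
    have k1 := key p1 p2 q1 q2 hpq
    have k2 := key q1 q2 p1 p2 hpq.symm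
    have e1 : p1 = q1 := le_antisymm k2.1 k1.1
    have e2 : p2 = q2 := le_antisymm k2.2 k1.2
    rw [e1, e2]
end

section
/- In Bmod^s: (i) normal monomorphisms are stable under composition: if L is a normal subobject of (M, τ) (i.e., L = f⁻¹(X^ρ) for some Bmod^s-morphism f : M → X) and M is a normal subobject of (N, υ), then L is a normal subobject of (N, υ); (ii) normal epimorphisms are stable under composition: if α : (L, σ) → (M, τ) and β : (M, τ) → (N, υ) are normal epimorphisms, then β∘α is a normal epimorphism. (These are the key closure properties showing that Bmod^s, with the ideal of null morphisms, is a homological category in the sense of Grandis.) -/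
universe u

/-!
Stability of normal monomorphisms and normal epimorphisms under composition in
`Bmod^s` (Lemmas `normalmonos` and `stablenormepis`, key steps of Theorem
`homological`).  Objects of `Bmod^s` are pairs `(A, σ)` of a `𝔹`-module
(an object of `SemilatSupCat`) with an involutive endomorphism `σ`; morphisms
commute with the involutions; an element is null when fixed by the involution;
the kernel of a morphism is the preimage of the null elements; a subobject is
normal when it is such a kernel; a normal epimorphism is a surjective morphism
which is the cokernel of its kernel.
-/

/-- The kernel (preimage of the null elements of the codomain) of a morphism. -/
def kerSet {A B : SemilatSupCat.{u}} (τ : SupBotHom B B) (f : SupBotHom A B) :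
    Set A :=
  {a : A | τ (f a) = f a}

/-- `f` is equivariant for the involutions `σ` and `τ`. -/
def Equivar {A B : SemilatSupCat.{u}} (σ : SupBotHom A A) (τ : SupBotHom B B)
    (f : SupBotHom A B) : Prop :=
  ∀ a : A, f (σ a) = τ (f a)

/-- `m : (A, σ) → (B, τ)` is a normal monomorphism of `Bmod^s`: an injective
equivariant morphism whose range is the kernel of some `Bmod^s`-morphism. -/
def IsNormalMonoS {A B : SemilatSupCat.{u}} (σ : SupBotHom A A)
    (τ : SupBotHom B B) (m : SupBotHom A B) : Prop :=
  Equivar σ τ m ∧ Function.Injective m ∧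
    ∃ (X : SemilatSupCat.{u}) (ρ : SupBotHom X X), (∀ x : X, ρ (ρ x) = x) ∧
      ∃ f : SupBotHom B X, Equivar τ ρ f ∧ Set.range m = kerSet ρ f

/-- `q : (A, σ) → (B, τ)` is a normal epimorphism of `Bmod^s`: a surjective
equivariant morphism which is the cokernel of its kernel, i.e. `q b = q b'`
iff `h b = h b'` for every equivariant `h` with `Ker q ⊆ Ker h`. -/
def IsNormalEpiS {A B : SemilatSupCat.{u}} (σ : SupBotHom A A)
    (τ : SupBotHom B B) (q : SupBotHom A B) : Prop :=
  Equivar σ τ q ∧ Function.Surjective q ∧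
    ∀ b b' : A, q b = q b' ↔
      ∀ (Z : SemilatSupCat.{u}) (ρ : SupBotHom Z Z), (∀ z : Z, ρ (ρ z) = z) →
        ∀ h : SupBotHom A Z, Equivar σ ρ h →
          kerSet τ q ⊆ kerSet ρ h → h b = h b'



section Aux
variable {M N X Z : Type u} [SemilatticeSup M] [OrderBot M] [SemilatticeSup N] [OrderBot N]
  [SemilatticeSup X] [OrderBot X] [SemilatticeSup Z] [OrderBot Z]

/-- Involution induced on upper sets. -/
def upInv (ρ : SupBotHom X X) : SupBotHom (UpperSet X) (UpperSet X) where
  toFun U := ⟨ρ ⁻¹' U, fun a b hab ha => U.upper (OrderHomClass.mono ρ hab) ha⟩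
  map_sup' U V := SetLike.coe_injective <| by
    simp only [UpperSet.coe_sup]; exact Set.preimage_inter
  map_bot' := SetLike.coe_injective <| by
    simp [UpperSet.coe_bot]

@[simp] lemma mem_upInv (ρ : SupBotHom X X) (U : UpperSet X) (x : X) :
    x ∈ upInv ρ U ↔ ρ x ∈ U := Iff.rfl

/-- Extension of `f : M → X` along `n : M → N` valued in upper sets of `X`. -/
def extHom (n : SupBotHom M N) (f : SupBotHom M X) : SupBotHom N (UpperSet X) where
  toFun y := ⟨{x | ∃ z : M, y ≤ n z ∧ f z ≤ x},
    fun a b hab ⟨z, h1, h2⟩ => ⟨z, h1, h2.trans hab⟩⟩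
  map_sup' y y' := SetLike.coe_injective <| by
    rw [UpperSet.coe_sup]
    ext x
    constructor
    · rintro ⟨z, h1, h2⟩
      exact ⟨⟨z, le_trans le_sup_left h1, h2⟩, ⟨z, le_trans le_sup_right h1, h2⟩⟩
    · rintro ⟨⟨z, h1, h2⟩, ⟨z', h1', h2'⟩⟩
      refine ⟨z ⊔ z', by rw [map_sup]; exact sup_le_sup h1 h1', by rw [map_sup]; exact sup_le h2 h2'⟩
  map_bot' := SetLike.coe_injective <| by
    rw [UpperSet.coe_bot]
    ext x
    simp only [Set.mem_setOf_eq, Set.mem_univ, iff_true]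
    exact ⟨⊥, bot_le, by rw [map_bot]; exact bot_le⟩

@[simp] lemma mem_extHom (n : SupBotHom M N) (f : SupBotHom M X) (y : N) (x : X) :
    x ∈ extHom n f y ↔ ∃ z : M, y ≤ n z ∧ f z ≤ x := Iff.rfl

lemma extHom_apply (n : SupBotHom M N) (hn : Function.Injective n) (f : SupBotHom M X) (w : M) :
    extHom n f (n w) = UpperSet.Ici (f w) := by
  refine SetLike.coe_injective ?_
  ext x
  simp only [SetLike.mem_coe, mem_extHom, UpperSet.coe_Ici, Set.mem_Ici]
  constructor
  · rintro ⟨z, h1, h2⟩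
    have hwz : w ≤ z := by
      have : n (w ⊔ z) = n z := by rw [map_sup, sup_eq_right.2 h1]
      have := hn this
      exact le_of_sup_eq this
    exact le_trans (OrderHomClass.mono f hwz) h2
  · intro hx
    exact ⟨w, le_rfl, hx⟩

/-- Pairing of two morphisms. -/
def pairHom (g : SupBotHom N X) (h : SupBotHom N Z) : SupBotHom N (X × Z) where
  toFun y := (g y, h y)
  map_sup' y y' := by simp [Prod.ext_iff, map_sup]
  map_bot' := by simp [Prod.ext_iff, map_bot, Prod.fst_bot, Prod.snd_bot]

/-- Product of two morphisms. -/
def prodMapHom (g : SupBotHom X X) (h : SupBotHom Z Z) : SupBotHom (X × Z) (X × Z) where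
  toFun p := (g p.1, h p.2)
  map_sup' p q := by simp [Prod.ext_iff, map_sup]
  map_bot' := by simp [Prod.ext_iff, map_bot, Prod.fst_bot, Prod.snd_bot]

/-- Descend a morphism along a surjection it coequalizes. -/
noncomputable def descend (α : SupBotHom M N) (hs : Function.Surjective α) (h : SupBotHom M Z)
    (hc : ∀ a a', α a = α a' → h a = h a') : SupBotHom N Z where
  toFun x := h (Function.surjInv hs x)
  map_sup' x y := by
    obtain ⟨a, rfl⟩ := hs x
    obtain ⟨b, rfl⟩ := hs y
    have k : ∀ c : M, h (Function.surjInv hs (α c)) = h c :=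
      fun c => hc _ _ (Function.surjInv_eq hs (α c))
    show h (Function.surjInv hs (α a ⊔ α b)) =
      h (Function.surjInv hs (α a)) ⊔ h (Function.surjInv hs (α b))
    rw [← map_sup, k, k, k, map_sup]
  map_bot' := by
    have k : h (Function.surjInv hs (α ⊥)) = h ⊥ := hc _ _ (Function.surjInv_eq hs (α ⊥))
    show h (Function.surjInv hs ⊥) = ⊥
    rw [← (map_bot α), k, map_bot]

lemma descend_apply (α : SupBotHom M N) (hs : Function.Surjective α) (h : SupBotHom M Z)
    (hc : ∀ a a', α a = α a' → h a = h a') (a : M) :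
    descend α hs h hc (α a) = h a :=
  hc _ _ (Function.surjInv_eq hs (α a))

end Aux


theorem stmt18 :
    -- (i) normal monomorphisms are stable under composition
    (∀ (L M N : SemilatSupCat.{u})
      (σ : SupBotHom L L) (τ : SupBotHom M M) (υ : SupBotHom N N),
      (∀ x : L, σ (σ x) = x) → (∀ x : M, τ (τ x) = x) →
      (∀ x : N, υ (υ x) = x) →
      ∀ (m : SupBotHom L M) (n : SupBotHom M N),
        IsNormalMonoS σ τ m → IsNormalMonoS τ υ n →
        IsNormalMonoS σ υ (n.comp m)) ∧
    -- (ii) normal epimorphisms are stable under composition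
    (∀ (L M N : SemilatSupCat.{u})
      (σ : SupBotHom L L) (τ : SupBotHom M M) (υ : SupBotHom N N),
      (∀ x : L, σ (σ x) = x) → (∀ x : M, τ (τ x) = x) →
      (∀ x : N, υ (υ x) = x) →
      ∀ (α : SupBotHom L M) (β : SupBotHom M N),
        IsNormalEpiS σ τ α → IsNormalEpiS τ υ β →
        IsNormalEpiS σ υ (β.comp α)) := by
  constructor
  · -- (i)
    intro L M N σ τ υ hσ hτ hυ m n hm hn
    obtain ⟨hem, him, X1, ρ1, hρ1, f, hef, hrf⟩ := hm
    obtain ⟨hen, hin, X2, ρ2, hρ2, g, heg, hrg⟩ := hn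
    refine ⟨?_, ?_, SemilatSupCat.of (↥X2 × UpperSet ↥X1),
      prodMapHom ρ2 (upInv ρ1), ?_, pairHom g (extHom n f), ?_, ?_⟩
    · intro a
      show n (m (σ a)) = υ (n (m a))
      rw [hem a, hen (m a)]
    · intro a b hab
      exact him (hin hab)
    · -- involutive
      rintro ⟨x2, U⟩
      refine Prod.ext (hρ2 x2) ?_
      show upInv ρ1 (upInv ρ1 U) = U
      refine SetLike.coe_injective ?_
      ext x
      show ρ1 (ρ1 x) ∈ U ↔ x ∈ U
      rw [hρ1 x]
    · -- equivariance of pairHom g (extHom n f)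
      intro y
      refine Prod.ext (heg y) ?_
      show extHom n f (υ y) = upInv ρ1 (extHom n f y)
      refine SetLike.coe_injective ?_
      ext x
      show (∃ z, υ y ≤ n z ∧ f z ≤ x) ↔ ∃ z, y ≤ n z ∧ f z ≤ ρ1 x
      constructor
      · rintro ⟨z, h1, h2⟩
        refine ⟨τ z, ?_, ?_⟩
        · have := OrderHomClass.mono υ h1
          rw [hυ y, ← hen z] at this
          exact this
        · have := OrderHomClass.mono ρ1 h2
          rw [← hef z] at this
          exact this
      · rintro ⟨z, h1, h2⟩
        refine ⟨τ z, ?_, ?_⟩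
        · have := OrderHomClass.mono υ h1
          rw [← hen z] at this
          exact this
        · have := OrderHomClass.mono ρ1 h2
          rw [hρ1 x, ← hef z] at this
          exact this
    · -- range equality
      ext y
      constructor
      · rintro ⟨l, rfl⟩
        have hyn : (n.comp m) l = n (m l) := rfl
        rw [hyn]
        have hml : ρ1 (f (m l)) = f (m l) := by
          have : m l ∈ kerSet ρ1 f := hrf ▸ ⟨l, rfl⟩
          exact this
        have hnml : ρ2 (g (n (m l))) = g (n (m l)) := by
          have : n (m l) ∈ kerSet ρ2 g := hrg ▸ ⟨m l, rfl⟩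
          exact this
        show prodMapHom ρ2 (upInv ρ1) (pairHom g (extHom n f) (n (m l)))
            = pairHom g (extHom n f) (n (m l))
        refine Prod.ext hnml ?_
        show upInv ρ1 (extHom n f (n (m l))) = extHom n f (n (m l))
        rw [extHom_apply n hin f (m l)]
        refine SetLike.coe_injective ?_
        ext x
        show f (m l) ≤ ρ1 x ↔ f (m l) ≤ x
        constructor
        · intro h
          have := OrderHomClass.mono ρ1 h
          rw [hρ1 x, hml] at this
          exact this
        · intro h
          have := OrderHomClass.mono ρ1 h
          rw [hml] at this
          exact this
      · intro hy
        have h1 : ρ2 (g y) = g y := congrArg Prod.fst hy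
        have h2 : upInv ρ1 (extHom n f y) = extHom n f y := congrArg Prod.snd hy
        have hyr : y ∈ Set.range n := hrg.symm ▸ h1
        obtain ⟨w, rfl⟩ := hyr
        rw [extHom_apply n hin f w] at h2
        have hfw : ρ1 (f w) = f w := by
          have hmem : f w ∈ upInv ρ1 (UpperSet.Ici (f w)) := by
            rw [h2]; exact le_rfl
          have hle : f w ≤ ρ1 (f w) := hmem
          have hge : ρ1 (f w) ≤ f w := by
            have := OrderHomClass.mono ρ1 hle
            rwa [hρ1 (f w)] at this
          exact le_antisymm hge hle
        have : w ∈ kerSet ρ1 f := hfw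
        rw [← hrf] at this
        obtain ⟨l, rfl⟩ := this
        exact ⟨l, rfl⟩
  · -- (ii)
    intro L M N σ τ υ hσ hτ hυ α β hα hβ
    obtain ⟨heα, hsα, hcα⟩ := hα
    obtain ⟨heβ, hsβ, hcβ⟩ := hβ
    have hcomp : ∀ a : L, (β.comp α) a = β (α a) := fun _ => rfl
    have hecomp : Equivar σ υ (β.comp α) := by
      intro a
      show β (α (σ a)) = υ (β (α a))
      rw [heα a, heβ (α a)]
    refine ⟨hecomp, ?_, ?_⟩
    · intro c
      obtain ⟨x, hx⟩ := hsβ c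
      obtain ⟨a, ha⟩ := hsα x
      exact ⟨a, by rw [hcomp, ha, hx]⟩
    · intro b b'
      constructor
      · intro hq Z ρ hρ h he hk
        have hkα : kerSet τ α ⊆ kerSet υ (β.comp α) := by
          intro a ha
          show υ (β (α a)) = β (α a)
          rw [← heβ (α a), ha]
        have hcongr : ∀ a a', α a = α a' → h a = h a' := by
          intro a a' haa
          exact (hcα a a').mp haa Z ρ hρ h he (fun x hx => hk (hkα hx))
        have he' : Equivar τ ρ (descend α hsα h hcongr) := by
          intro x
          obtain ⟨a, rfl⟩ := hsα x
          rw [← heα a, descend_apply, descend_apply, he a]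
        have hk' : kerSet υ β ⊆ kerSet ρ (descend α hsα h hcongr) := by
          intro x hx
          obtain ⟨a, rfl⟩ := hsα x
          have : a ∈ kerSet υ (β.comp α) := hx
          have hha : ρ (h a) = h a := hk this
          show ρ (descend α hsα h hcongr (α a)) = descend α hsα h hcongr (α a)
          rw [descend_apply, hha]
        have := (hcβ (α b) (α b')).mp hq Z ρ hρ (descend α hsα h hcongr) he' hk'
        rwa [descend_apply, descend_apply] at this
      · intro H
        exact H N υ hυ (β.comp α) hecomp (fun x hx => hx)
end

section
/- Let ι : I' ↪ I →(i'') I'' be a short doubly exact sequence in Bmod^s with middle term I both injective and projective in Bmod^s. Let F be the internal-Hom functor F(X) := the object of Bmod^s of all Bmod^s-morphisms I'' → X with pointwise joins and involution h ↦ ρ_X∘h; for a morphism of short doubly exact sequences w = (w', w, w'') from a sequence c : C' ↪ C →(c'') C'' to ι, let [F(w'')] denote the induced morphism Coker(F(c'')) → Coker(F(i'')), where F(c'') : F(C) → F(C'') is post-composition with c'' and Coker denotes the quotient by the cokernel congruence. Assume: for any two endomorphisms w₁, w₂ of the sequence ι whose restrictions to I' coincide, one has [F(w₁'')] = [F(w₂'')].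 Then for every short doubly exact sequence c in Bmod^s, every morphism v : C' → I', and any two morphisms of short doubly exact sequences w₁, w₂ : c → ι extending v, one has [F(w₁'')] = [F(w₂'')] : Coker(F(c'')) → Coker(F(i'')). (Condition (a) of Grandis for F = Hom(I'', −) reduces to endomorphisms of I'.) -/
universe u

/-!
Theorem `reduction toendo`: let `ι : I' ↪ I ↠ I''` be a short doubly exact
sequence in `Bmod^s` whose middle term `I` is both injective and projective.
For the functor `F = Hom_{Bmod^s}(I'', -)` (internal Hom), condition (a) of
Grandis holds for arbitrary morphisms of short doubly exact sequences `c → ι`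
provided it holds for all endomorphisms of the sequence `ι` restricting to an
endomorphism of `I'`: if any two endomorphisms of `ι` agreeing on
`I' = Ker(ι.p)` induce the same map `Coker (F ι.p) → Coker (F ι.p)`, then for
every short doubly exact sequence `c`, any two morphisms `w₁, w₂ : c → ι`
agreeing on `Ker (c.p)` induce the same map
`Coker (F c.p) → Coker (F ι.p)`.
Equality of the induced maps on cokernels is expressed elementwise: for every
`u ∈ F(C'')`, the elements `w₁'' ∘ u` and `w₂'' ∘ u` of `F(I'')` are
identified by the cokernel congruence of `F(ι.p)`.
-/

/-- An object of `Bmod^s`: a `𝔹`-module (join-semilattice with `⊥`) together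
with an involutive `𝔹`-module endomorphism. -/
structure BmodS : Type (u + 1) where
  /-- underlying carrier -/
  carrier : Type u
  [isSemilatticeSup : SemilatticeSup carrier]
  [isOrderBot : OrderBot carrier]
  /-- the involution -/
  inv : SupBotHom carrier carrier
  inv_inv : ∀ x, inv (inv x) = x

attribute [instance] BmodS.isSemilatticeSup BmodS.isOrderBot

instance : CoeSort BmodS.{u} (Type u) :=
  ⟨BmodS.carrier⟩

/-- Morphisms of `Bmod^s`: `𝔹`-module morphisms commuting with the
involutions. -/
def BmodSHom (A B : BmodS.{u}) : Type u :=
  {f : SupBotHom A B // ∀ a : A, f (A.inv a) = B.inv (f a)}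

namespace BmodSHom

instance (A B : BmodS.{u}) : FunLike (BmodSHom A B) A B where
  coe f := ⇑f.1
  coe_injective := fun f g h => Subtype.ext (DFunLike.coe_injective h)

/-- Composition of `Bmod^s`-morphisms. -/
def comp {A B C : BmodS.{u}} (g : BmodSHom B C) (f : BmodSHom A B) :
    BmodSHom A C :=
  ⟨g.1.comp f.1, fun a => by
    simp only [SupBotHom.comp_apply, f.2 a, g.2 (f.1 a)]⟩

/-- Pointwise joins and bottom make the `Bmod^s`-morphisms `A → B` into a
`𝔹`-module. -/
instance (A B : BmodS.{u}) : SemilatticeSup (BmodSHom A B) :=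
  Subtype.semilatticeSup fun f g hf hg a => by
    simp only [SupBotHom.sup_apply, hf a, hg a, map_sup]

instance (A B : BmodS.{u}) : OrderBot (BmodSHom A B) :=
  Subtype.orderBot (fun a => by simp)

end BmodSHom

/-- The kernel of a `Bmod^s`-morphism: the preimage of the null elements. -/
def kerS {A B : BmodS.{u}} (f : BmodSHom A B) : Set A :=
  {a : A | B.inv (f a) = f a}

/-- The cokernel congruence of `f : A → B` on `B`: `b` and `b'` have the same
image in `Coker f` iff `g b = g b'` for every `Bmod^s`-morphism `g` out of `B`
that is null on the range of `f`. -/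
def cokRel {A B : BmodS.{u}} (f : BmodSHom A B) (b b' : B) : Prop :=
  ∀ (Z : BmodS.{u}) (g : BmodSHom B Z),
    (∀ a : A, Z.inv (g (f a)) = g (f a)) → g b = g b'

/-- The internal Hom object `Hom_{Bmod^s}(Q, X)` of `Bmod^s`, with pointwise
joins and involution `h ↦ X.inv ∘ h`. -/
def HomObj (Q X : BmodS.{u}) : BmodS.{u} where
  carrier := BmodSHom Q X
  inv :=
    { toFun := fun h => ⟨X.inv.comp h.1, fun q => by
        simp only [SupBotHom.comp_apply, h.2 q]⟩
      map_sup' := fun h₁ h₂ => by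
        apply Subtype.ext
        apply DFunLike.coe_injective
        funext q
        exact map_sup X.inv (h₁.1 q) (h₂.1 q)
      map_bot' := by
        apply Subtype.ext
        apply DFunLike.coe_injective
        funext q
        exact map_bot X.inv }
  inv_inv := fun h => by
    apply Subtype.ext
    apply DFunLike.coe_injective
    funext q
    exact X.inv_inv (h.1 q)

/-- The functor `F = Hom_{Bmod^s}(Q, -)` on morphisms: post-composition. -/
def postComp (Q : BmodS.{u}) {A B : BmodS.{u}} (f : BmodSHom A B) :
    BmodSHom (HomObj Q A) (HomObj Q B) :=
  ⟨{ toFun := fun h => f.comp h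
     map_sup' := fun h₁ h₂ => by
       apply Subtype.ext
       apply DFunLike.coe_injective
       funext q
       exact map_sup f.1 (h₁.1 q) (h₂.1 q)
     map_bot' := by
       apply Subtype.ext
       apply DFunLike.coe_injective
       funext q
       exact map_bot f.1 },
   fun h => by
     apply Subtype.ext
     apply DFunLike.coe_injective
     funext q
     exact f.2 (h.1 q)⟩

/-- A short doubly exact sequence `Ker p ↪ A ↠ A''` of `Bmod^s`: a surjective
morphism `p : A → A''` which is the cokernel of (the inclusion of) its kernel. -/
structure ShortSeq : Type (u + 1) where
  /-- middle term -/
  A : BmodS.{u}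
  /-- third term -/
  A'' : BmodS.{u}
  /-- the normal epimorphism -/
  p : BmodSHom A A''
  surj : Function.Surjective p
  cok : ∀ b b' : A, p b = p b' ↔
    ∀ (Z : BmodS.{u}) (h : BmodSHom A Z),
      (∀ x ∈ kerS p, Z.inv (h x) = h x) → h b = h b'

/-- A morphism of short doubly exact sequences: a compatible pair of
`Bmod^s`-morphisms on the middle and third terms, restricting to a morphism
of the kernels (first terms). -/
structure SeqHom (c ι : ShortSeq.{u}) : Type u where
  /-- the component on the middle terms -/
  mid : BmodSHom c.A ι.A
  /-- the component on the third terms -/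
  third : BmodSHom c.A'' ι.A''
  mapsKer : ∀ x ∈ kerS c.p, mid x ∈ kerS ι.p
  square : ∀ x : c.A, third (c.p x) = ι.p (mid x)

/-- `I` is an injective object of `Bmod^s`: morphisms into `I` extend along
injective morphisms (inclusions of involution-stable sub-`𝔹`-modules). -/
def IsInjObj (I : BmodS.{u}) : Prop :=
  ∀ (M N : BmodS.{u}) (j : BmodSHom M N), Function.Injective j →
    ∀ f : BmodSHom M I, ∃ g : BmodSHom N I, ∀ m : M, g (j m) = f m

/-- `P` is a projective object of `Bmod^s`: morphisms out of `P` lift along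
surjective morphisms. -/
def IsProjObj (P : BmodS.{u}) : Prop :=
  ∀ (M N : BmodS.{u}) (q : BmodSHom M N), Function.Surjective q →
    ∀ f : BmodSHom P N, ∃ g : BmodSHom P M, ∀ x : P, q (g x) = f x

theorem stmt19 (ι : ShortSeq.{u})
    (hinj : IsInjObj ι.A) (hproj : IsProjObj ι.A)
    -- condition (a) for all endomorphisms of `ι` agreeing on `I' = Ker ι.p`:
    (hendo : ∀ w₁ w₂ : SeqHom ι ι,
      (∀ x ∈ kerS ι.p, w₁.mid x = w₂.mid x) →
      ∀ u : BmodSHom ι.A'' ι.A'',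
        cokRel (postComp ι.A'' ι.p) (w₁.third.comp u) (w₂.third.comp u)) :
    -- then condition (a) holds for arbitrary morphisms `c → ι`:
    ∀ (c : ShortSeq.{u}) (w₁ w₂ : SeqHom c ι),
      (∀ x ∈ kerS c.p, w₁.mid x = w₂.mid x) →
      ∀ u : BmodSHom ι.A'' c.A'',
        cokRel (postComp ι.A'' ι.p) (w₁.third.comp u) (w₂.third.comp u) := by
  intro c w₁ w₂ hagree u
  obtain ⟨s, hs⟩ := hproj c.A c.A'' c.p c.surj (u.comp ι.p)
  have hs' : ∀ x : ι.A, c.p (s x) = u (ι.p x) := hs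
  let idA : BmodSHom ι.A'' ι.A'' := ⟨SupBotHom.id _, fun _ => rfl⟩
  have hker : ∀ x ∈ kerS ι.p, s x ∈ kerS c.p := by
    intro x hx
    simp only [kerS, Set.mem_setOf_eq] at hx ⊢
    rw [hs' x]
    calc c.A''.inv (u (ι.p x)) = u (ι.A''.inv (ι.p x)) := (u.2 (ι.p x)).symm
      _ = u (ι.p x) := by rw [hx]
  let mk : SeqHom c ι → SeqHom ι ι := fun w =>
    { mid := w.mid.comp s
      third := w.third.comp u
      mapsKer := fun x hx => w.mapsKer _ (hker x hx)
      square := by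
        intro x
        show w.third (u (ι.p x)) = ι.p (w.mid (s x))
        rw [← hs' x, w.square] }
  have hag : ∀ x ∈ kerS ι.p, (mk w₁).mid x = (mk w₂).mid x := by
    intro x hx
    exact hagree _ (hker x hx)
  have h := hendo (mk w₁) (mk w₂) hag idA
  have e : ∀ w : SeqHom c ι,
      (mk w).third.comp idA = w.third.comp u := by
    intro w
    apply Subtype.ext
    apply DFunLike.coe_injective
    funext q
    rfl
  rwa [e w₁, e w₂] at h
end
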